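/- arXiv:math/0310083 — 10 statements merged into one kernel-verified Lean document; each statement's English description precedes it below -/
import Mathlib

section
/- Let B be a negative definite symmetric bilinear form on a free Z-module L with basis {b_j}, arising from a connected plumbing tree (i.e. (b_i,b_j) ∈ {0,1} for i≠j). If x ∈ L satisfies (x, b_j) ≤ 0 for every basis vector b_j, then x is effective, i.e. all coefficients of x in the basis {b_j} are ≥ 0. -/
/-- In a connected negative definite plumbing lattice, if `(x, b_j) ≤ 0`
for every basis vector `b_j`, then `x` is effective. -/
theorem effective_of_antinef {J : Type*} [Fintype J] [DecidableEq J]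
    (B : J → J → ℤ)
    (hsym : ∀ i j, B i j = B j i)
    (hoff : ∀ i j, i ≠ j → B i j = 0 ∨ B i j = 1)
    (hconn : (SimpleGraph.fromRel fun i j => B i j = 1).Connected)
    (hneg : ∀ x : J → ℤ, x ≠ 0 → ∑ i, ∑ j, x i * B i j * x j < 0)
    (x : J → ℤ) (hx : ∀ j, ∑ i, x i * B i j ≤ 0) :
    ∀ j, 0 ≤ x j := by
  by_contra h
  push_neg at h
  obtain ⟨j0, hj0⟩ := h
  set y : J → ℤ := fun j => max (-x j) 0 with hy
  have hy0 : ∀ j, 0 ≤ y j := fun j => le_max_right _ _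
  have hyne : y ≠ 0 := by
    intro h0
    have := congrFun h0 j0
    simp only [hy, Pi.zero_apply] at this
    omega
  have hneg' := hneg y hyne
  -- decompose y i = max (x i) 0 - x i
  have hdec : ∀ i, y i = max (x i) 0 - x i := by
    intro i
    simp only [hy]
    omega
  have hsplit : ∑ i, ∑ j, y i * B i j * y j
      = (∑ i, ∑ j, max (x i) 0 * B i j * y j) - ∑ i, ∑ j, x i * B i j * y j := by
    rw [← Finset.sum_sub_distrib]
    refine Finset.sum_congr rfl fun i _ => ?_
    rw [← Finset.sum_sub_distrib]
    refine Finset.sum_congr rfl fun j _ => ?_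
    rw [hdec i]
    ring
  have hA : 0 ≤ ∑ i, ∑ j, max (x i) 0 * B i j * y j := by
    refine Finset.sum_nonneg fun i _ => Finset.sum_nonneg fun j _ => ?_
    rcases le_or_gt (x i) 0 with hxi | hxi
    · simp [max_eq_right hxi]
    rcases le_or_gt 0 (x j) with hxj | hxj
    · have : y j = 0 := by simp only [hy]; omega
      simp [this]
    have hij : i ≠ j := by intro e; rw [e] at hxi; omega
    have hB : 0 ≤ B i j := by rcases hoff i j hij with h' | h' <;> omega
    exact mul_nonneg (mul_nonneg (le_max_right _ _) hB) (hy0 j)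
  have hBle : ∑ i, ∑ j, x i * B i j * y j ≤ 0 := by
    rw [Finset.sum_comm]
    refine Finset.sum_nonpos fun j _ => ?_
    have : ∑ i, x i * B i j * y j = (∑ i, x i * B i j) * y j := by
      rw [Finset.sum_mul]
    rw [this]
    exact mul_nonpos_of_nonpos_of_nonneg (hx j) (hy0 j)
  have : 0 ≤ ∑ i, ∑ j, y i * B i j * y j := by
    rw [hsplit]; omega
  omega
end

section
/- Let B be a negative definite symmetric bilinear form on L⊗Q from a connected plumbing tree, and let S_Q = {x ∈ L⊗Q : (x, b_j) ≤ 0 for all j}. If y_1, y_2 ∈ S_Q, then the componentwise minimum min{y_1, y_2} (taken in the basis {b_j}) also belongs to S_Q. -/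
/-- `S_Q = {x : (x, b_j) ≤ 0 ∀ j}` is closed under componentwise minimum. -/
theorem SQ_min_mem {J : Type*} [Fintype J] [DecidableEq J]
    (B : J → J → ℚ)
    (hsym : ∀ i j, B i j = B j i)
    (hoff : ∀ i j, i ≠ j → B i j = 0 ∨ B i j = 1)
    (hconn : (SimpleGraph.fromRel fun i j => B i j = 1).Connected)
    (hneg : ∀ x : J → ℚ, x ≠ 0 → ∑ i, ∑ j, x i * B i j * x j < 0)
    (y₁ y₂ : J → ℚ)
    (hy₁ : ∀ j, ∑ i, y₁ i * B i j ≤ 0)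
    (hy₂ : ∀ j, ∑ i, y₂ i * B i j ≤ 0) :
    ∀ j, ∑ i, min (y₁ i) (y₂ i) * B i j ≤ 0 := by
  intro j
  have key : ∀ y : J → ℚ, (∀ k, ∑ i, y i * B i k ≤ 0) →
      min (y₁ j) (y₂ j) = y j → (∀ i, min (y₁ i) (y₂ i) ≤ y i) →
      ∑ i, min (y₁ i) (y₂ i) * B i j ≤ 0 := by
    intro y hy hj hle
    calc ∑ i, min (y₁ i) (y₂ i) * B i j ≤ ∑ i, y i * B i j := by
          apply Finset.sum_le_sum
          intro i _
          rcases eq_or_ne i j with rfl | hne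
          · rw [hj]
          · rcases hoff i j hne with h0 | h1
            · simp [h0]
            · rw [h1, mul_one, mul_one]; exact hle i
      _ ≤ 0 := hy j
  rcases le_total (y₁ j) (y₂ j) with h | h
  · exact key y₁ hy₁ (min_eq_left h) fun i => min_le_left _ _
  · exact key y₂ hy₂ (min_eq_right h) fun i => min_le_right _ _
end

section
/- Fix a class l' + L in L' (viewed as a sublattice of L⊗Q), where L' is the dual lattice of a negative definite plumbing lattice. Then the intersection (l' + L) ∩ S_Q admits a unique minimal element with respect to the componentwise partial order ≤. -/
section Aux
variable {J : Type*} [Fintype J] [DecidableEq J] (B : J → J → ℚ)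

/-- nonnegativity of elements of S_Q -/
lemma aux_nonneg
    (hsym : ∀ i j, B i j = B j i)
    (hoff : ∀ i j, i ≠ j → B i j = 0 ∨ B i j = 1)
    (hneg : ∀ x : J → ℚ, x ≠ 0 → ∑ i, ∑ j, x i * B i j * x j < 0)
    (y : J → ℚ) (hy : ∀ j, ∑ i, y i * B i j ≤ 0) : ∀ i, 0 ≤ y i := by
  set n : J → ℚ := fun i => max (-y i) 0 with hn
  have hnnonneg : ∀ i, 0 ≤ n i := fun i => le_max_right _ _
  have hzero : n = 0 := by
    by_contra h
    have hQ := hneg n h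
    have hQ' : (0:ℚ) ≤ ∑ i, ∑ j, n i * B i j * n j := by
      have hsplit : ∀ j, n j = (max (y j) 0) - y j := by
        intro j
        rcases le_total (y j) 0 with hc | hc
        · simp [hn, max_eq_left, hc, neg_nonneg.mpr hc, max_eq_left (neg_nonneg.mpr hc),
            max_eq_right hc]
        · simp [hn, max_eq_left hc, max_eq_right (neg_nonpos.mpr hc)]
      have : ∑ i, ∑ j, n i * B i j * n j
          = (∑ i, ∑ j, n i * B i j * max (y j) 0) - ∑ i, ∑ j, n i * B i j * y j := by
        rw [← Finset.sum_sub_distrib]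
        refine Finset.sum_congr rfl fun i _ => ?_
        rw [← Finset.sum_sub_distrib]
        refine Finset.sum_congr rfl fun j _ => ?_
        rw [hsplit j]; ring
      rw [this]
      have h1 : (0:ℚ) ≤ ∑ i, ∑ j, n i * B i j * max (y j) 0 := by
        refine Finset.sum_nonneg fun i _ => Finset.sum_nonneg fun j _ => ?_
        rcases eq_or_ne i j with rfl | hij
        · rcases le_total (y i) 0 with hc | hc
          · have : max (y i) 0 = 0 := max_eq_right hc
            simp [this]
          · have : n i = 0 := max_eq_right (neg_nonpos.mpr hc)
            simp [this]
        · rcases hoff i j hij with h0 | h1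
          · simp [h0]
          · rw [h1]
            exact mul_nonneg (by simpa using hnnonneg i) (le_max_right _ _)
      have h2 : ∑ i, ∑ j, n i * B i j * y j ≤ 0 := by
        refine Finset.sum_nonpos fun i _ => ?_
        have : ∑ j, n i * B i j * y j = n i * ∑ j, y j * B j i := by
          rw [Finset.mul_sum]
          refine Finset.sum_congr rfl fun j _ => ?_
          rw [hsym i j]; ring
        rw [this]
        exact mul_nonpos_of_nonneg_of_nonpos (hnnonneg i) (hy i)
      linarith
    linarith
  intro i
  have h0 : n i = 0 := by rw [hzero]; rfl
  have h1 : -y i ≤ n i := le_max_left _ _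
  rw [h0] at h1
  linarith

end Aux

section Aux2
set_option linter.unusedSectionVars false
variable {J : Type*} [Fintype J] [DecidableEq J] (B : J → J → ℚ)

lemma aux_meet
    (hsym : ∀ i j, B i j = B j i)
    (hoff : ∀ i j, i ≠ j → B i j = 0 ∨ B i j = 1)
    (y z : J → ℚ) (hy : ∀ j, ∑ i, y i * B i j ≤ 0) (hz : ∀ j, ∑ i, z i * B i j ≤ 0) :
    ∀ j, ∑ i, min (y i) (z i) * B i j ≤ 0 := by
  intro j
  have key : ∀ (a b : J → ℚ), (∀ j', ∑ i, a i * B i j' ≤ 0) → min (a j) (b j) = a j →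
      ∑ i, min (a i) (b i) * B i j ≤ 0 := by
    intro a b ha hmin
    refine le_trans (Finset.sum_le_sum fun i _ => ?_) (ha j)
    rcases eq_or_ne i j with rfl | hij
    · rw [hmin]
    · rcases hoff i j hij with h0 | h1
      · simp [h0]
      · rw [h1, mul_one, mul_one]; exact min_le_left _ _
  rcases le_total (y j) (z j) with hc | hc
  · exact key y z hy (min_eq_left hc)
  · have : ∀ i, min (y i) (z i) = min (z i) (y i) := fun i => min_comm _ _
    simp only [this]
    exact key z y hz (min_eq_left hc)

lemma aux_exists
    (hsym : ∀ i j, B i j = B j i)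
    (hneg : ∀ x : J → ℚ, x ≠ 0 → ∑ i, ∑ j, x i * B i j * x j < 0)
    (l' : J → ℚ) :
    ∃ x : J → ℤ, ∀ j, ∑ i, (l' i + x i) * B i j ≤ 0 := by
  set M : Matrix J J ℚ := Matrix.of B with hM
  have hinj : Function.Injective M.mulVecLin := by
    rw [← LinearMap.ker_eq_bot, LinearMap.ker_eq_bot']
    intro v hv
    by_contra hvne
    have h := hneg v hvne
    have : ∑ i, ∑ j, v i * B i j * v j = 0 := by
      have hzero : ∀ i, ∑ j, B i j * v j = 0 := by
        intro i
        have := congrFun hv i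
        simpa [M, Matrix.mulVecLin_apply, Matrix.mulVec, dotProduct] using this
      calc ∑ i, ∑ j, v i * B i j * v j = ∑ i, v i * ∑ j, B i j * v j := by
            refine Finset.sum_congr rfl fun i _ => ?_
            rw [Finset.mul_sum]; simp [mul_assoc]
          _ = 0 := by simp [hzero]
    linarith
  have hsurj : Function.Surjective M.mulVecLin :=
    (LinearMap.injective_iff_surjective).mp hinj
  obtain ⟨u, hu⟩ := hsurj (fun _ => (-1 : ℚ))
  have hu' : ∀ j, ∑ i, B j i * u i = -1 := by
    intro j
    have := congrFun hu j
    simpa [M, Matrix.mulVecLin_apply, Matrix.mulVec, dotProduct] using this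
  set t : ℚ := ∑ j, (|∑ i, l' i * B i j| + ∑ i, |B j i|) with ht
  have htj : ∀ j, |∑ i, l' i * B i j| + ∑ i, |B j i| ≤ t := by
    intro j
    rw [ht]
    exact Finset.single_le_sum
      (f := fun k => |∑ i, l' i * B i k| + ∑ i, |B k i|)
      (fun k _ => add_nonneg (abs_nonneg _) (Finset.sum_nonneg fun i _ => abs_nonneg _))
      (Finset.mem_univ j)
  refine ⟨fun i => ⌈t * u i⌉, fun j => ?_⟩
  have hsum : ∑ i, (l' i + (⌈t * u i⌉ : ℚ)) * B i j
      = (∑ i, l' i * B i j) + (-t) + ∑ i, B i j * ((⌈t * u i⌉ : ℚ) - t * u i) := by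
    have h1 : ∑ i, (l' i + (⌈t * u i⌉ : ℚ)) * B i j
        = (∑ i, l' i * B i j) + ∑ i, (⌈t * u i⌉ : ℚ) * B i j := by
      rw [← Finset.sum_add_distrib]
      exact Finset.sum_congr rfl fun i _ => by ring
    rw [h1]
    have h2 : ∑ i, (⌈t * u i⌉ : ℚ) * B i j
        = t * (∑ i, B j i * u i) + ∑ i, B i j * ((⌈t * u i⌉ : ℚ) - t * u i) := by
      rw [Finset.mul_sum, ← Finset.sum_add_distrib]
      refine Finset.sum_congr rfl fun i _ => ?_
      rw [hsym i j]; ring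
    rw [h2, hu' j]; ring
  rw [hsum]
  have herr : ∑ i, B i j * ((⌈t * u i⌉ : ℚ) - t * u i) ≤ ∑ i, |B j i| := by
    refine Finset.sum_le_sum fun i _ => ?_
    have he0 : (0:ℚ) ≤ (⌈t * u i⌉ : ℚ) - t * u i := by
      have := Int.le_ceil (t * u i); linarith
    have he1 : (⌈t * u i⌉ : ℚ) - t * u i ≤ 1 := by
      have := Int.ceil_lt_add_one (t * u i); linarith
    calc B i j * ((⌈t * u i⌉ : ℚ) - t * u i) ≤ |B i j| * ((⌈t * u i⌉ : ℚ) - t * u i) :=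
          mul_le_mul_of_nonneg_right (le_abs_self _) he0
      _ ≤ |B i j| * 1 := mul_le_mul_of_nonneg_left he1 (abs_nonneg _)
      _ = |B j i| := by rw [mul_one, hsym i j]
  have habs : ∑ i, l' i * B i j ≤ |∑ i, l' i * B i j| := le_abs_self _
  linarith [htj j]

end Aux2


/-- for any class `l' + L` in the dual lattice `L' ⊂ L ⊗ ℚ` of a connected
negative definite plumbing lattice, the set `(l' + L) ∩ S_Q` has a unique minimal element
with respect to the componentwise order. -/
theorem exists_unique_minimal_rep {J : Type*} [Fintype J] [DecidableEq J]
    (B : J → J → ℚ)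
    (hsym : ∀ i j, B i j = B j i)
    (hoff : ∀ i j, i ≠ j → B i j = 0 ∨ B i j = 1)
    (hconn : (SimpleGraph.fromRel fun i j => B i j = 1).Connected)
    (hneg : ∀ x : J → ℚ, x ≠ 0 → ∑ i, ∑ j, x i * B i j * x j < 0)
    (l' : J → ℚ)
    (hl' : ∀ j, ∃ m : ℤ, ∑ i, l' i * B i j = m) :
    ∃! m : J → ℚ,
      ((∃ x : J → ℤ, m = fun i => l' i + x i) ∧ (∀ j, ∑ i, m i * B i j ≤ 0)) ∧
      ∀ y : J → ℚ, (∃ x : J → ℤ, y = fun i => l' i + x i) → (∀ j, ∑ i, y i * B i j ≤ 0) →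
        ∀ i, m i ≤ y i := by
  classical
  haveI : Nonempty J := hconn.nonempty
  set P : (J → ℚ) → Prop := fun y =>
    (∃ x : J → ℤ, y = fun i => l' i + x i) ∧ (∀ j, ∑ i, y i * B i j ≤ 0) with hPdef
  obtain ⟨x₀, hx₀⟩ := aux_exists B hsym hneg l'
  have hP0 : P (fun i => l' i + x₀ i) := ⟨⟨x₀, rfl⟩, hx₀⟩
  have hmeetP : ∀ y z, P y → P z → P (fun i => min (y i) (z i)) := by
    rintro y z ⟨⟨xy, rfl⟩, hy⟩ ⟨⟨xz, rfl⟩, hz⟩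
    refine ⟨⟨fun i => min (xy i) (xz i), funext fun i => ?_⟩,
      aux_meet B hsym hoff _ _ hy hz⟩
    push_cast
    rw [min_add_add_left]
  have Hmin : ∀ k : J, ∃ wk : J → ℚ, P wk ∧ ∀ z, P z → wk k ≤ z k := by
    intro k
    obtain ⟨n, ⟨y, hyP, hyk⟩, hleast⟩ := Int.exists_least_of_bdd
      (P := fun n : ℤ => ∃ y : J → ℚ, P y ∧ y k = l' k + n)
      ⟨⌈-l' k⌉, by
        rintro n ⟨y, hyP, hyk⟩
        have h0 : 0 ≤ y k := aux_nonneg B hsym hoff hneg y hyP.2 k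
        rw [Int.ceil_le]
        rw [hyk] at h0
        linarith⟩
      ⟨x₀ k, _, hP0, rfl⟩
    refine ⟨y, hyP, fun z hzP => ?_⟩
    obtain ⟨xz, rfl⟩ := hzP.1
    have := hleast (xz k) ⟨_, hzP, rfl⟩
    rw [hyk]
    show l' k + (n : ℚ) ≤ l' k + (xz k : ℚ)
    have hc : ((n : ℚ)) ≤ (xz k : ℚ) := by exact_mod_cast this
    linarith
  choose w hw1 hw2 using Hmin
  have hne : (Finset.univ : Finset J).Nonempty := Finset.univ_nonempty
  have hinf : ∀ (s : Finset J) (hs : s.Nonempty), P (s.inf' hs w) := by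
    intro s hs
    induction hs using Finset.Nonempty.cons_induction with
    | singleton a => simpa using hw1 a
    | cons a s ha hs ih =>
      rw [Finset.inf'_cons]
      have h := hmeetP (w a) (s.inf' hs w) (hw1 a) ih
      have he : (fun i => min (w a i) (s.inf' hs w i)) = w a ⊓ s.inf' hs w := by
        funext i
        simp [Pi.inf_apply]
      rwa [he] at h
  set m : J → ℚ := Finset.univ.inf' hne w with hm
  have hPm : P m := hinf _ _
  have hminm : ∀ y : J → ℚ, (∃ x : J → ℤ, y = fun i => l' i + x i) →
      (∀ j, ∑ i, y i * B i j ≤ 0) → ∀ i, m i ≤ y i := by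
    intro y h1 h2 i
    have hle : m ≤ w i := Finset.inf'_le w (Finset.mem_univ i)
    exact le_trans (hle i) (hw2 i y ⟨h1, h2⟩)
  refine ⟨m, ⟨⟨hPm.1, hPm.2⟩, hminm⟩, ?_⟩
  rintro m' ⟨⟨h1', h2'⟩, hmin'⟩
  funext i
  exact le_antisymm (hmin' m hPm.1 hPm.2 i) (hminm m' h1' h2' i)
end

section
/- For any x > 0 in a negative definite plumbing lattice with χ(x) > 0 (where χ = χ_K is the Riemann–Roch function), there exists a basis vector b_j in the support of x such that χ(x - b_j) ≤ χ(x). -/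
/-- The Riemann–Roch function `χ(x) = -(K(x) + (x,x))/2` of a plumbing lattice,
where `K(b_j) = -(b_j, b_j) - 2`. -/
noncomputable def chiRR {J : Type*} [Fintype J] (B : J → J → ℤ) (x : J → ℤ) : ℚ :=
  (-(∑ j, (x j : ℚ) * (-(B j j : ℚ) - 2)) - ∑ i, ∑ j, (x i : ℚ) * (B i j : ℚ) * (x j : ℚ)) / 2

/-- Key identity: `χ(x - b_j) = χ(x) + (x, b_j) - (b_j, b_j) - 1`. -/
theorem chiRR_sub_single {J : Type*} [Fintype J] [DecidableEq J]
    (B : J → J → ℤ) (hsym : ∀ i j, B i j = B j i)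
    (x : J → ℤ) (j : J) :
    chiRR B (x - Pi.single j 1)
      = chiRR B x + (∑ i, (x i : ℚ) * (B i j : ℚ)) - (B j j : ℚ) - 1 := by
  have hδ : ∀ k, (((x - Pi.single j 1 : J → ℤ) k : ℤ) : ℚ)
      = (x k : ℚ) - (if k = j then (1:ℚ) else 0) := by
    intro k
    simp only [Pi.sub_apply, Pi.single_apply]
    split_ifs <;> push_cast <;> ring
  simp only [chiRR, hδ]
  have h1 : ∑ k, ((x k : ℚ) - (if k = j then (1:ℚ) else 0)) * (-(B k k : ℚ) - 2)
      = (∑ k, (x k : ℚ) * (-(B k k : ℚ) - 2)) - (-(B j j : ℚ) - 2) := by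
    simp [sub_mul, Finset.sum_sub_distrib, ite_mul]
  have h2 : ∑ i, ∑ k, ((x i : ℚ) - (if i = j then (1:ℚ) else 0)) * (B i k : ℚ)
        * ((x k : ℚ) - (if k = j then (1:ℚ) else 0))
      = (∑ i, ∑ k, (x i : ℚ) * (B i k : ℚ) * (x k : ℚ))
        - 2 * (∑ i, (x i : ℚ) * (B i j : ℚ)) + (B j j : ℚ) := by
    have hexp : ∀ i k, ((x i : ℚ) - (if i = j then (1:ℚ) else 0)) * (B i k : ℚ)
        * ((x k : ℚ) - (if k = j then (1:ℚ) else 0))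
        = (x i : ℚ) * (B i k : ℚ) * (x k : ℚ)
          - (if i = j then (1:ℚ) else 0) * ((B i k : ℚ) * (x k : ℚ))
          - (x i : ℚ) * (B i k : ℚ) * (if k = j then (1:ℚ) else 0)
          + (if i = j then (1:ℚ) else 0) * (B i k : ℚ) * (if k = j then (1:ℚ) else 0) := by
      intro i k; ring
    simp only [hexp, Finset.sum_add_distrib, Finset.sum_sub_distrib, ite_mul,
      mul_ite, mul_one, mul_zero, one_mul, zero_mul, Finset.sum_ite_eq,
      Finset.sum_ite_eq', Finset.mem_univ, if_true]
    have hrow : ∑ k, (B j k : ℚ) * (x k : ℚ) = ∑ i, (x i : ℚ) * (B i j : ℚ) := by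
      apply Finset.sum_congr rfl
      intro k _
      rw [hsym j k]; ring
    have h3 : ∀ i : J, ∑ k, (if i = j then (B i k : ℚ) * (x k : ℚ) else 0)
        = if i = j then ∑ k, (B i k : ℚ) * (x k : ℚ) else 0 := by
      intro i; split_ifs <;> simp
    simp only [h3, Finset.sum_ite_eq', Finset.mem_univ, if_true]
    rw [hrow]; ring
  rw [h1, h2]; ring

/-- for any `x > 0` with `χ(x) > 0` there is a basis vector `b_j` in the
support of `x` with `χ(x - b_j) ≤ χ(x)`. -/
theorem exists_decrease_of_chi_pos {J : Type*} [Fintype J] [DecidableEq J]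
    (B : J → J → ℤ)
    (hsym : ∀ i j, B i j = B j i)
    (hoff : ∀ i j, i ≠ j → B i j = 0 ∨ B i j = 1)
    (hconn : (SimpleGraph.fromRel fun i j => B i j = 1).Connected)
    (hneg : ∀ x : J → ℤ, x ≠ 0 → ∑ i, ∑ j, x i * B i j * x j < 0)
    (x : J → ℤ) (hx : ∀ j, 0 ≤ x j) (hx0 : x ≠ 0)
    (hchi : 0 < chiRR B x) :
    ∃ j, x j ≠ 0 ∧ chiRR B (x - Pi.single j 1) ≤ chiRR B x := by
  by_contra hcon
  push_neg at hcon
  -- hcon : ∀ j, x j ≠ 0 → chiRR B x < chiRR B (x - Pi.single j 1)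
  have key : ∀ j, x j ≠ 0 → (B j j + 2 : ℤ) ≤ ∑ i, x i * B i j := by
    intro j hj
    have hlt := hcon j hj
    rw [chiRR_sub_single B hsym x j] at hlt
    have h1 : (B j j : ℚ) + 1 < ∑ i, (x i : ℚ) * (B i j : ℚ) := by linarith
    have h2 : ((B j j + 1 : ℤ) : ℚ) < ((∑ i, x i * B i j : ℤ) : ℚ) := by
      push_cast; exact h1
    have h3 : (B j j + 1 : ℤ) < ∑ i, x i * B i j := by exact_mod_cast h2
    omega
  -- now show chiRR B x ≤ 0, a contradiction
  have hQ : ∑ i, ∑ k, (x i : ℚ) * (B i k : ℚ) * (x k : ℚ)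
      = ∑ k, (∑ i, (x i : ℚ) * (B i k : ℚ)) * (x k : ℚ) := by
    rw [Finset.sum_comm]
    apply Finset.sum_congr rfl
    intro k _
    rw [Finset.sum_mul]
  have hform : chiRR B x
      = (∑ k, ((x k : ℚ) * ((B k k : ℚ) + 2)
          - (∑ i, (x i : ℚ) * (B i k : ℚ)) * (x k : ℚ))) / 2 := by
    rw [chiRR, hQ, Finset.sum_sub_distrib]
    have : -∑ k, (x k : ℚ) * (-(B k k : ℚ) - 2) = ∑ k, (x k : ℚ) * ((B k k : ℚ) + 2) := by
      rw [← Finset.sum_neg_distrib]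
      apply Finset.sum_congr rfl
      intro k _; ring
    rw [this]
  have hterm : ∀ k : J, (x k : ℚ) * ((B k k : ℚ) + 2)
      - (∑ i, (x i : ℚ) * (B i k : ℚ)) * (x k : ℚ) ≤ 0 := by
    intro k
    by_cases hk : x k = 0
    · simp [hk]
    · have h1 := key k hk
      have hxk : (0 : ℚ) ≤ (x k : ℚ) := by exact_mod_cast hx k
      have h2 : ((B k k : ℚ) + 2) ≤ ∑ i, (x i : ℚ) * (B i k : ℚ) := by
        have h3 : ((B k k + 2 : ℤ) : ℚ) ≤ ((∑ i, x i * B i k : ℤ) : ℚ) := by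
          exact_mod_cast h1
        push_cast at h3
        linarith
      nlinarith
  have hle : chiRR B x ≤ 0 := by
    rw [hform]
    have : ∑ k, ((x k : ℚ) * ((B k k : ℚ) + 2)
        - (∑ i, (x i : ℚ) * (B i k : ℚ)) * (x k : ℚ)) ≤ 0 :=
      Finset.sum_nonpos fun k _ => hterm k
    linarith
  linarith
end

section
/- In a negative definite plumbing lattice, for every x ∈ L and every characteristic orbit [k] with distinguished minimal representative l'_{[k]}, there exists a unique minimal y ∈ L with x ≤ y and (y + l'_{[k]}, b_j) ≤ 0 for all j. -/
/-!
Off-diagonal entries of `B` are nonnegative, so lowering the other coordinates of `y` can only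
lower `(y + l, b_j)`. Hence the coordinatewise infimum of all admissible `y ≥ x` is itself
admissible: at each `j` it agrees with some admissible `y` and lies below it. The set is nonempty
because negative definiteness gives an integral `v ≥ 0` with `(v, b_j) ≤ -1` for all `j`, and
`x + N v` is admissible for `N` large.
-/

open Finset

theorem exists_pos_nat_mul_eq_intCast {ι : Type*} [Fintype ι] (q : ι → ℚ) :
    ∃ d : ℕ, 0 < d ∧ ∃ v : ι → ℤ, ∀ i, (v i : ℚ) = d * q i := by
  refine ⟨∏ i, (q i).den, prod_pos fun i _ => (q i).den_pos, ?_⟩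
  have h : ∀ i, ∃ n : ℤ, (n : ℚ) = (∏ k, (q k).den : ℕ) * q i := by
    intro i
    obtain ⟨e, he⟩ := dvd_prod_of_mem (fun k => (q k).den) (mem_univ i)
    refine ⟨e * (q i).num, ?_⟩
    rw [he]
    push_cast
    rw [← Rat.mul_den_eq_num]
    ring
  choose v hv using h
  exact ⟨v, hv⟩

theorem exists_mem_lowerBounds_forall_exists_eq {ι : Type*} {S : Set (ι → ℤ)} (hne : S.Nonempty)
    (hbdd : BddBelow S) : ∃ m ∈ lowerBounds S, ∀ j, ∃ y ∈ S, y j = m j := by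
  obtain ⟨x, hx⟩ := hbdd
  have hcoord : ∀ j, ∃ n : ℤ, (∃ y ∈ S, y j = n) ∧ ∀ k : ℤ, (∃ y ∈ S, y j = k) → n ≤ k := by
    intro j
    obtain ⟨y, hy⟩ := hne
    exact Int.exists_least_of_bdd ⟨x j, by rintro _ ⟨z, hz, rfl⟩; exact hx hz j⟩ ⟨y j, y, hy, rfl⟩
  choose m hm_attained hm_least using hcoord
  exact ⟨m, fun y hy j => hm_least j (y j) ⟨y, hy, rfl⟩, hm_attained⟩

section

variable {J : Type*} [Fintype J] {B : J → J → ℚ}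

theorem sum_mul_le_sum_mul_of_le_of_eq (hB : ∀ i j, i ≠ j → 0 ≤ B i j) {m w : J → ℚ}
    (hle : m ≤ w) {j : J} (hj : m j = w j) : ∑ i, m i * B i j ≤ ∑ i, w i * B i j := by
  refine sum_le_sum fun i _ => ?_
  rcases eq_or_ne i j with rfl | hij
  · rw [hj]
  · exact mul_le_mul_of_nonneg_right (hle i) (hB i j hij)

/-- The inverse of `-B` is entrywise nonnegative. -/
theorem nonneg_of_sum_mul_nonpos (hB : ∀ i j, i ≠ j → 0 ≤ B i j)
    (hneg : ∀ x : J → ℚ, x ≠ 0 → ∑ i, ∑ j, x i * B i j * x j < 0) {u : J → ℚ}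
    (hu : ∀ j, ∑ i, u i * B i j ≤ 0) : 0 ≤ u := by
  set w : J → ℚ := u ⊓ 0
  have hw_nonpos : ∀ i, w i ≤ 0 := fun i => min_le_right _ _
  -- `(u - w)_i w_i = 0`, so only off-diagonal cross terms survive, and those are `≤ 0`.
  have hcross : ∀ i j, (u i - w i) * B i j * w j ≤ 0 := by
    intro i j
    rcases eq_or_ne i j with rfl | hij
    · rcases le_total 0 (u i) with h | h <;> simp [w, h]
    · exact mul_nonpos_of_nonneg_of_nonpos
        (mul_nonneg (sub_nonneg.mpr (min_le_left _ _)) (hB i j hij)) (hw_nonpos j)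
  have hsplit : ∑ j, (∑ i, u i * B i j) * w j
      = ∑ i, ∑ j, w i * B i j * w j + ∑ j, ∑ i, (u i - w i) * B i j * w j := by
    rw [sum_comm (f := fun i j => w i * B i j * w j), ← sum_add_distrib]
    refine sum_congr rfl fun j _ => ?_
    rw [sum_mul, ← sum_add_distrib]
    exact sum_congr rfl fun i _ => by ring
  have hlhs : 0 ≤ ∑ j, (∑ i, u i * B i j) * w j :=
    sum_nonneg fun j _ => mul_nonneg_of_nonpos_of_nonpos (hu j) (hw_nonpos j)
  have hw : w = 0 := by
    by_contra hw
    linarith [hneg w hw, sum_nonpos fun j (_ : j ∈ univ) => sum_nonpos fun i (_ : i ∈ univ) =>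
      hcross i j]
  intro i
  simpa [w] using congrFun hw i

theorem exists_sum_mul_eq_neg_one
    (hneg : ∀ x : J → ℚ, x ≠ 0 → ∑ i, ∑ j, x i * B i j * x j < 0) :
    ∃ u : J → ℚ, ∀ j, ∑ i, u i * B i j = -1 := by
  have hinj : Function.Injective (Matrix.vecMulLinear (Matrix.of B)) := by
    rw [← LinearMap.ker_eq_bot, LinearMap.ker_eq_bot']
    intro v hv
    by_contra hv0
    have hzero : ∑ i, ∑ j, v i * B i j * v j = 0 := by
      rw [sum_comm]
      refine sum_eq_zero fun j _ => ?_
      have hj : ∑ i, v i * B i j = 0 := congrFun hv j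
      rw [← sum_mul, hj, zero_mul]
    exact (hneg v hv0).ne hzero
  obtain ⟨u, hu⟩ := LinearMap.injective_iff_surjective.mp hinj (fun _ => -1)
  exact ⟨u, congrFun hu⟩

theorem exists_int_nonneg_sum_mul_le_neg_one (hB : ∀ i j, i ≠ j → 0 ≤ B i j)
    (hneg : ∀ x : J → ℚ, x ≠ 0 → ∑ i, ∑ j, x i * B i j * x j < 0) :
    ∃ v : J → ℤ, 0 ≤ v ∧ ∀ j, ∑ i, (v i : ℚ) * B i j ≤ -1 := by
  obtain ⟨u, hu⟩ := exists_sum_mul_eq_neg_one hneg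
  obtain ⟨d, hd, v, hv⟩ := exists_pos_nat_mul_eq_intCast u
  have hvB : ∀ j, ∑ i, (v i : ℚ) * B i j = -d := by
    intro j
    simp_rw [hv, mul_assoc, ← mul_sum, hu j]
    ring
  have hv_nonneg : (0 : J → ℚ) ≤ fun i => (v i : ℚ) :=
    nonneg_of_sum_mul_nonpos hB hneg fun j => by
      rw [hvB j]
      exact neg_nonpos.mpr d.cast_nonneg
  refine ⟨v, fun i => Int.cast_nonneg_iff.mp (hv_nonneg i), fun j => ?_⟩
  rw [hvB j, neg_le_neg_iff]
  exact_mod_cast hd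

/-- For `l = l'_{[k]}` this is `{y ∈ S_{[k]} | x ≤ y}`. -/
def dominatingSet (B : J → J → ℚ) (l : J → ℚ) (x : J → ℤ) : Set (J → ℤ) :=
  {y | x ≤ y ∧ ∀ j, ∑ i, ((y i : ℚ) + l i) * B i j ≤ 0}

theorem dominatingSet_nonempty (hB : ∀ i j, i ≠ j → 0 ≤ B i j)
    (hneg : ∀ x : J → ℚ, x ≠ 0 → ∑ i, ∑ j, x i * B i j * x j < 0) (l : J → ℚ) (x : J → ℤ) :
    (dominatingSet B l x).Nonempty := by
  obtain ⟨v, hv_nonneg, hvB⟩ := exists_int_nonneg_sum_mul_le_neg_one hB hneg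
  obtain ⟨M, hM⟩ := (Set.finite_range fun j => ∑ i, ((x i : ℚ) + l i) * B i j).bddAbove
  obtain ⟨N, hN⟩ := exists_nat_ge M
  refine ⟨x + (N : ℤ) • v, fun i => ?_, fun j => ?_⟩
  · simpa using mul_nonneg (Int.natCast_nonneg N) (hv_nonneg i)
  · have hsum : ∑ i, (((x + (N : ℤ) • v) i : ℤ) + l i) * B i j
        = ∑ i, ((x i : ℚ) + l i) * B i j + N * ∑ i, (v i : ℚ) * B i j := by
      rw [mul_sum, ← sum_add_distrib]
      refine sum_congr rfl fun i _ => ?_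
      push_cast [Pi.add_apply, Pi.smul_apply, smul_eq_mul]
      ring
    have hxj : ∑ i, ((x i : ℚ) + l i) * B i j ≤ N := (hM ⟨j, rfl⟩).trans hN
    rw [hsum]
    nlinarith [hvB j, N.cast_nonneg (α := ℚ)]

theorem exists_isLeast_dominatingSet (hB : ∀ i j, i ≠ j → 0 ≤ B i j) {l : J → ℚ} {x : J → ℤ}
    (hne : (dominatingSet B l x).Nonempty) : ∃ m, IsLeast (dominatingSet B l x) m := by
  obtain ⟨m, hm_lower, hm_attained⟩ :=
    exists_mem_lowerBounds_forall_exists_eq hne ⟨x, fun y hy => hy.1⟩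
  refine ⟨m, ⟨fun j => ?_, fun j => ?_⟩, hm_lower⟩ <;> obtain ⟨y, hy, hyj⟩ := hm_attained j
  · exact hyj ▸ hy.1 j
  · refine le_trans (sum_mul_le_sum_mul_of_le_of_eq hB (fun i => ?_) (by rw [hyj])) (hy.2 j)
    simpa using hm_lower hy i

end

theorem exists_unique_minimal_dominating_general {J : Type*} [Fintype J]
    (B : J → J → ℚ)
    (hoff : ∀ i j, i ≠ j → B i j = 0 ∨ B i j = 1)
    (hneg : ∀ x : J → ℚ, x ≠ 0 → ∑ i, ∑ j, x i * B i j * x j < 0)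
    (l'k : J → ℚ)
    (x : J → ℤ) :
    ∃! y : J → ℤ,
      ((∀ j, x j ≤ y j) ∧ (∀ j, ∑ i, ((y i : ℚ) + l'k i) * B i j ≤ 0)) ∧
      ∀ z : J → ℤ, (∀ j, x j ≤ z j) → (∀ j, ∑ i, ((z i : ℚ) + l'k i) * B i j ≤ 0) →
        ∀ j, y j ≤ z j := by
  have hB : ∀ i j, i ≠ j → 0 ≤ B i j := fun i j hij => by
    rcases hoff i j hij with h | h <;> simp [h]
  obtain ⟨m, hm_mem, hm_least⟩ :=
    exists_isLeast_dominatingSet hB (dominatingSet_nonempty hB hneg l'k x)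
  refine ⟨m, ⟨hm_mem, fun z hxz hz => hm_least ⟨hxz, hz⟩⟩, ?_⟩
  rintro y ⟨hy_mem, hy_least⟩
  exact le_antisymm (hy_least m hm_mem.1 hm_mem.2) (hm_least hy_mem)

/-- in a negative definite plumbing lattice, for every `x ∈ L` and
distinguished minimal representative `l'_{[k]}`, there is a unique minimal `y ∈ L`
with `x ≤ y` and `(y + l'_{[k]}, b_j) ≤ 0` for all `j`. -/
theorem exists_unique_minimal_dominating {J : Type*} [Fintype J] [DecidableEq J]
    (B : J → J → ℚ)
    (hsym : ∀ i j, B i j = B j i)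
    (hoff : ∀ i j, i ≠ j → B i j = 0 ∨ B i j = 1)
    (hconn : (SimpleGraph.fromRel fun i j => B i j = 1).Connected)
    (hneg : ∀ x : J → ℚ, x ≠ 0 → ∑ i, ∑ j, x i * B i j * x j < 0)
    (l'k : J → ℚ)
    (hS : ∀ j, ∑ i, l'k i * B i j ≤ 0)
    (hmin : ∀ z : J → ℤ, (∀ j, ∑ i, (l'k i + z i) * B i j ≤ 0) → ∀ i, (0 : ℤ) ≤ z i)
    (x : J → ℤ) :
    ∃! y : J → ℤ,
      ((∀ j, x j ≤ y j) ∧ (∀ j, ∑ i, ((y i : ℚ) + l'k i) * B i j ≤ 0)) ∧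
      ∀ z : J → ℤ, (∀ j, x j ≤ z j) → (∀ j, ∑ i, ((z i : ℚ) + l'k i) * B i j ≤ 0) →
        ∀ j, y j ≤ z j :=
  exists_unique_minimal_dominating_general B hoff hneg l'k x
end

section
/- Laufer-type algorithm: start with x_0 = x ∈ L; while x_l ∉ S_{[k]}, pick j with (x_l + l'_{[k]}, b_j) > 0 and set x_{l+1} = x_l + b_j. Then the algorithm terminates, its endpoint is the unique minimal y ≥ x in S_{[k]}, and χ_k(x_{l+1}) ≤ χ_k(x_l) at every step (where k = K + 2l'_{[k]}). -/
/-!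
Every `z ≥ x₀` in `S_{[k]}` dominates the whole sequence: a step adds `b_j` only when
`(x + l', b_j) > 0`, whereas `x ≤ z` with `x_j = z_j` would give `(x + l', b_j) ≤ (z + l', b_j) ≤ 0`,
the off-diagonal pairings being nonnegative. Such a `z` exists, namely `x₀ + N E` for an effective
`E` with `(E, b_j) < 0` for all `j` and `N` large, and since each step outside `S_{[k]}` raises the
coordinate sum by one, the algorithm stops. Monotonicity of `χ_k` is the identity
`χ_k(x + b_j) = χ_k(x) + 1 - (x + l', b_j)` together with integrality of the pairing.
-/

/-- `χ_k(x)` for the distinguished characteristic element `k = K + 2 l'_{[k]}`,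
where `K(b_j) = -(b_j,b_j) - 2` and `(l'_{[k]})(x) = (l'_{[k]}, x)`. -/
noncomputable def chiDist {J : Type*} [Fintype J] (B : J → J → ℚ) (l'k : J → ℚ)
    (x : J → ℤ) : ℚ :=
  (-(∑ j, (x j : ℚ) * ((-(B j j) - 2) + 2 * ∑ i, l'k i * B i j))
      - ∑ i, ∑ j, (x i : ℚ) * B i j * (x j : ℚ)) / 2

open Matrix

section NegativeDefinite

variable {J : Type*} [Fintype J] {B : J → J → ℚ}

theorem nonneg_of_forall_sum_mul_nonpos (hoff : ∀ i j, i ≠ j → 0 ≤ B i j)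
    (hneg : ∀ x : J → ℚ, x ≠ 0 → ∑ i, ∑ j, x i * B i j * x j < 0)
    {y : J → ℚ} (hy : ∀ j, ∑ i, y i * B i j ≤ 0) : 0 ≤ y := by
  -- With `n = y⁻`, the terms `n_j (y_i + n_i) b_ij` are `≥ 0`, so `-(n, n) ≤ ∑ n_j (y, b_j) ≤ 0`.
  set n : J → ℚ := fun i => max (-y i) 0
  have hpos : ∀ i, y i + n i = max (y i) 0 := fun i => by
    rcases le_total (y i) 0 with h | h <;> simp [n, h]
  have hdisj : ∀ i, n i * max (y i) 0 = 0 := fun i => by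
    rcases le_total (y i) 0 with h | h <;> simp [n, h]
  have hcross : ∀ i j, -(n i * B i j * n j) ≤ n j * (y i * B i j) := by
    intro i j
    suffices 0 ≤ n j * ((y i + n i) * B i j) by linarith
    rw [hpos]
    rcases eq_or_ne i j with rfl | hij
    · rw [← mul_assoc, hdisj, zero_mul]
    · exact mul_nonneg (le_max_right _ _) (mul_nonneg (le_max_right _ _) (hoff i j hij))
  have hQ : 0 ≤ ∑ i, ∑ j, n i * B i j * n j := by
    have hlower : -∑ i, ∑ j, n i * B i j * n j ≤ ∑ j, n j * ∑ i, y i * B i j := by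
      simp only [Finset.mul_sum, ← Finset.sum_neg_distrib]
      rw [Finset.sum_comm]
      exact Finset.sum_le_sum fun j _ => Finset.sum_le_sum fun i _ => hcross i j
    have : ∑ j, n j * ∑ i, y i * B i j ≤ 0 :=
      Finset.sum_nonpos fun j _ => mul_nonpos_of_nonneg_of_nonpos (le_max_right _ _) (hy j)
    linarith
  have hn : n = 0 := by
    by_contra h
    exact (hneg n h).not_ge hQ
  intro i
  simpa [n] using congrFun hn i

theorem det_ne_zero_of_negDef [DecidableEq J]
    (hneg : ∀ x : J → ℚ, x ≠ 0 → ∑ i, ∑ j, x i * B i j * x j < 0) :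
    Matrix.det (B : Matrix J J ℚ) ≠ 0 := by
  intro hdet
  obtain ⟨v, hv, hvB⟩ := exists_vecMul_eq_zero_iff.mpr hdet
  have : ∑ i, ∑ j, v i * B i j * v j = 0 := by
    rw [Finset.sum_comm]
    refine Finset.sum_eq_zero fun j _ => ?_
    simpa [vecMul, dotProduct, ← Finset.sum_mul] using
      congrArg (· * v j) (congrFun hvB j)
  exact (hneg v hv).ne this

theorem exists_nonneg_forall_sum_mul_le_neg_one [DecidableEq J]
    (hBint : ∀ i j, ∃ m : ℤ, B i j = m) (hoff : ∀ i j, i ≠ j → 0 ≤ B i j)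
    (hneg : ∀ x : J → ℚ, x ≠ 0 → ∑ i, ∑ j, x i * B i j * x j < 0) :
    ∃ E : J → ℤ, 0 ≤ E ∧ ∀ j, ∑ i, (E i : ℚ) * B i j ≤ -1 := by
  obtain ⟨A, hA⟩ : ∃ A : Matrix J J ℤ, ∀ i j, B i j = A i j :=
    ⟨.of fun i j => (hBint i j).choose, fun i j => (hBint i j).choose_spec⟩
  have hdet : A.det ≠ 0 := by
    have hmap : (Int.castRingHom ℚ).mapMatrix A = B := by ext i j; exact (hA i j).symm
    have := RingHom.map_det (Int.castRingHom ℚ) A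
    rw [hmap] at this
    intro h
    exact det_ne_zero_of_negDef hneg (by rw [← this, h, map_zero])
  -- an integral positive multiple of `-B⁻¹ 𝟙`
  set E : J → ℤ := (fun _ => -A.det) ᵥ* adjugate A
  have hEA : E ᵥ* A = A.det • fun _ => -A.det := by
    rw [vecMul_vecMul, adjugate_mul, vecMul_smul, vecMul_one]
  have hle : ∀ j, ∑ i, (E i : ℚ) * B i j ≤ -1 := by
    intro j
    calc ∑ i, (E i : ℚ) * B i j = ((E ᵥ* A) j : ℤ) := by simp [hA, vecMul, dotProduct]
      _ = ((-(A.det * A.det) : ℤ) : ℚ) := by rw [hEA]; simp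
      _ ≤ -1 := by
        have := mul_self_pos.mpr hdet
        exact_mod_cast (by omega : -(A.det * A.det) ≤ -1)
  refine ⟨E, fun i => ?_, hle⟩
  have := nonneg_of_forall_sum_mul_nonpos hoff hneg (y := fun i => (E i : ℚ))
    fun j => (hle j).trans (by norm_num)
  exact_mod_cast (show (0 : ℚ) ≤ E i from this i)

end NegativeDefinite

section LauferStep

variable {J : Type*} [Fintype J] (B : J → J → ℚ) (r : J → ℚ)

/-- `shiftedPairing B r x j` is `(x + l', b_j)` for `r = l'`, and `IsShiftedAntinef B r x` says
`x ∈ S_{[k]}`. -/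
def shiftedPairing (x : J → ℤ) (j : J) : ℚ :=
  ∑ i, ((x i : ℚ) + r i) * B i j

def IsShiftedAntinef (x : J → ℤ) : Prop :=
  ∀ j, shiftedPairing B r x j ≤ 0

variable {B r}

theorem shiftedPairing_add_smul (x E : J → ℤ) (N : ℕ) (j : J) :
    shiftedPairing B r (x + N • E) j = shiftedPairing B r x j + N * ∑ i, (E i : ℚ) * B i j := by
  simp only [shiftedPairing, Finset.mul_sum, ← Finset.sum_add_distrib]
  refine Finset.sum_congr rfl fun i _ => ?_
  simp only [Pi.add_apply, nsmul_eq_mul, Pi.mul_apply, Pi.natCast_apply]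
  push_cast
  ring

theorem exists_ge_isShiftedAntinef [DecidableEq J] (hBint : ∀ i j, ∃ m : ℤ, B i j = m)
    (hoff : ∀ i j, i ≠ j → 0 ≤ B i j)
    (hneg : ∀ x : J → ℚ, x ≠ 0 → ∑ i, ∑ j, x i * B i j * x j < 0) (x : J → ℤ) :
    ∃ z, x ≤ z ∧ IsShiftedAntinef B r z := by
  obtain ⟨E, hE, hEB⟩ := exists_nonneg_forall_sum_mul_le_neg_one hBint hoff hneg
  set N := ⌈∑ j, |shiftedPairing B r x j|⌉₊
  refine ⟨x + N • E, le_add_of_nonneg_right (nsmul_nonneg hE N), fun j => ?_⟩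
  have hN : shiftedPairing B r x j ≤ N :=
    calc shiftedPairing B r x j ≤ |shiftedPairing B r x j| := le_abs_self _
      _ ≤ ∑ j, |shiftedPairing B r x j| :=
        Finset.single_le_sum (f := fun j => |shiftedPairing B r x j|) (fun j _ => abs_nonneg _)
          (Finset.mem_univ j)
      _ ≤ N := Nat.le_ceil _
  rw [shiftedPairing_add_smul]
  nlinarith [hEB j, (Nat.cast_nonneg N : (0 : ℚ) ≤ N)]

theorem chiDist_add_single [DecidableEq J] (hsym : ∀ i j, B i j = B j i) (x : J → ℤ) (j : J) :
    chiDist B r (x + Pi.single j 1) = chiDist B r x + 1 - shiftedPairing B r x j := by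
  have hcast : ∀ i, (((x + Pi.single j 1 : J → ℤ) i : ℤ) : ℚ) = x i + if i = j then 1 else 0 := by
    intro i; by_cases h : i = j <;> simp [h]
  simp only [chiDist, shiftedPairing, hcast, add_mul, mul_add, ite_mul, mul_ite, one_mul, mul_one,
    zero_mul, mul_zero, Finset.sum_add_distrib, Finset.sum_ite_irrel, Finset.sum_const_zero,
    Finset.sum_ite_eq', Finset.mem_univ, if_true]
  have : ∑ i, B j i * (x i : ℚ) = ∑ i, (x i : ℚ) * B i j :=
    Finset.sum_congr rfl fun i _ => by rw [hsym, mul_comm]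
  rw [this]
  ring

theorem one_le_shiftedPairing (hBint : ∀ i j, ∃ m : ℤ, B i j = m)
    (hr : ∀ j, ∃ m : ℤ, ∑ i, r i * B i j = m) {x : J → ℤ} {j : J}
    (h : 0 < shiftedPairing B r x j) : 1 ≤ shiftedPairing B r x j := by
  choose A hA using hBint
  obtain ⟨m, hm⟩ := hr j
  have hint : shiftedPairing B r x j = ((∑ i, x i * A i j + m : ℤ) : ℚ) := by
    simp only [shiftedPairing, add_mul, Finset.sum_add_distrib, hm]
    simp only [hA]
    push_cast
    rfl
  rw [hint] at h ⊢
  exact_mod_cast (Int.cast_pos.mp h : (0 : ℤ) < _)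

variable [DecidableEq J]

variable (B r) in
def IsLauferStep (x y : J → ℤ) : Prop :=
  IsShiftedAntinef B r x ∧ y = x ∨ ∃ j, 0 < shiftedPairing B r x j ∧ y = x + Pi.single j 1

namespace IsLauferStep

variable {x y : J → ℤ}

theorem le (h : IsLauferStep B r x y) : x ≤ y := by
  rcases h with ⟨-, rfl⟩ | ⟨j, -, rfl⟩
  · exact le_rfl
  · exact le_add_of_nonneg_right (Pi.single_nonneg.mpr zero_le_one)

theorem sum_eq_add_one (h : IsLauferStep B r x y) (hx : ¬ IsShiftedAntinef B r x) :
    ∑ i, y i = ∑ i, x i + 1 := by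
  rcases h with ⟨hx', -⟩ | ⟨j, -, rfl⟩
  · exact absurd hx' hx
  · simp [Finset.sum_add_distrib]

theorem le_of_le (hoff : ∀ i j, i ≠ j → 0 ≤ B i j) (h : IsLauferStep B r x y) {z : J → ℤ}
    (hxz : x ≤ z) (hz : IsShiftedAntinef B r z) : y ≤ z := by
  rcases h with ⟨-, rfl⟩ | ⟨j, hj, rfl⟩
  · exact hxz
  have hlt : x j < z j := by
    refine (hxz j).lt_of_ne fun hxj => ?_
    have : shiftedPairing B r x j ≤ shiftedPairing B r z j := by
      refine Finset.sum_le_sum fun i _ => ?_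
      rcases eq_or_ne i j with rfl | hij
      · rw [hxj]
      · have : (x i : ℚ) ≤ z i := by exact_mod_cast hxz i
        exact mul_le_mul_of_nonneg_right (by linarith) (hoff i j hij)
    linarith [hz j]
  intro i
  rcases eq_or_ne i j with rfl | hij
  · simpa using hlt
  · simpa [hij] using hxz i

theorem chiDist_le (hsym : ∀ i j, B i j = B j i) (hBint : ∀ i j, ∃ m : ℤ, B i j = m)
    (hr : ∀ j, ∃ m : ℤ, ∑ i, r i * B i j = m) (h : IsLauferStep B r x y) :
    chiDist B r y ≤ chiDist B r x := by
  rcases h with ⟨-, rfl⟩ | ⟨j, hj, rfl⟩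
  · exact le_rfl
  · rw [chiDist_add_single hsym]
    linarith [one_le_shiftedPairing hBint hr hj]

end IsLauferStep

variable {c : ℕ → J → ℤ}

theorem le_of_forall_isLauferStep (hoff : ∀ i j, i ≠ j → 0 ≤ B i j)
    (hc : ∀ l, IsLauferStep B r (c l) (c (l + 1))) {z : J → ℤ} (h0 : c 0 ≤ z)
    (hz : IsShiftedAntinef B r z) (l : ℕ) : c l ≤ z := by
  induction l with
  | zero => exact h0
  | succ l ih => exact (hc l).le_of_le hoff ih hz

theorem exists_isShiftedAntinef_of_forall_isLauferStep (hBint : ∀ i j, ∃ m : ℤ, B i j = m)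
    (hoff : ∀ i j, i ≠ j → 0 ≤ B i j)
    (hneg : ∀ x : J → ℚ, x ≠ 0 → ∑ i, ∑ j, x i * B i j * x j < 0)
    (hc : ∀ l, IsLauferStep B r (c l) (c (l + 1))) : ∃ t, IsShiftedAntinef B r (c t) := by
  obtain ⟨z, hcz, hz⟩ := exists_ge_isShiftedAntinef (r := r) hBint hoff hneg (c 0)
  by_contra! hnever
  have hsum : ∀ l, ∑ i, c l i = ∑ i, c 0 i + l := by
    intro l
    induction l with
    | zero => simp
    | succ l ih => rw [(hc l).sum_eq_add_one (hnever l), ih]; push_cast; ring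
  set l := (∑ i, z i - ∑ i, c 0 i).toNat + 1
  have hbound : ∑ i, c l i ≤ ∑ i, z i :=
    Finset.sum_le_sum fun i _ => le_of_forall_isLauferStep hoff hc hcz hz l i
  rw [hsum] at hbound
  omega

end LauferStep

theorem laufer_algorithm_general {J : Type*} [Fintype J] [DecidableEq J]
    (B : J → J → ℚ)
    (hsym : ∀ i j, B i j = B j i)
    (hoff : ∀ i j, i ≠ j → B i j = 0 ∨ B i j = 1)
    (hBint : ∀ i j, ∃ m : ℤ, B i j = m)
    (hneg : ∀ x : J → ℚ, x ≠ 0 → ∑ i, ∑ j, x i * B i j * x j < 0)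
    (l'k : J → ℚ)
    (hlkint : ∀ j, ∃ m : ℤ, ∑ i, l'k i * B i j = m)
    (x₀ : J → ℤ) (c : ℕ → J → ℤ) (hc0 : c 0 = x₀)
    (hstep : ∀ l, ¬ (∀ j, ∑ i, ((c l i : ℚ) + l'k i) * B i j ≤ 0) →
      ∃ j, 0 < ∑ i, ((c l i : ℚ) + l'k i) * B i j ∧ c (l + 1) = c l + Pi.single j 1)
    (hstop : ∀ l, (∀ j, ∑ i, ((c l i : ℚ) + l'k i) * B i j ≤ 0) → c (l + 1) = c l) :
    (∃ t, ∀ j, ∑ i, ((c t i : ℚ) + l'k i) * B i j ≤ 0) ∧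
    (∀ t, (∀ j, ∑ i, ((c t i : ℚ) + l'k i) * B i j ≤ 0) →
      ((∀ j, x₀ j ≤ c t j) ∧
        ∀ z : J → ℤ, (∀ j, x₀ j ≤ z j) → (∀ j, ∑ i, ((z i : ℚ) + l'k i) * B i j ≤ 0) →
          ∀ j, c t j ≤ z j)) ∧
    (∀ l, chiDist B l'k (c (l + 1)) ≤ chiDist B l'k (c l)) := by
  subst hc0
  have hoff' : ∀ i j, i ≠ j → 0 ≤ B i j := fun i j hij => by
    rcases hoff i j hij with h | h <;> simp [h]
  have hc : ∀ l, IsLauferStep B l'k (c l) (c (l + 1)) := fun l => by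
    by_cases h : IsShiftedAntinef B l'k (c l)
    · exact .inl ⟨h, hstop l h⟩
    · exact .inr (hstep l h)
  refine ⟨exists_isShiftedAntinef_of_forall_isLauferStep hBint hoff' hneg hc, fun t _ => ⟨?_, ?_⟩,
    fun l => (hc l).chiDist_le hsym hBint hlkint⟩
  · exact monotone_nat_of_le_succ (fun l => (hc l).le) (Nat.zero_le t)
  · exact fun z hz hzS => le_of_forall_isLauferStep hoff' hc hz hzS t

/-- generalized Laufer algorithm: starting from `x₀`, repeatedly add a
base element `b_j` with `(x_l + l'_{[k]}, b_j) > 0` as long as `x_l ∉ S_{[k]}`.  Then the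
algorithm terminates, its endpoint is the unique minimal `y ≥ x₀` in `S_{[k]}`, and
`χ_k(x_{l+1}) ≤ χ_k(x_l)` at every step (with `k = K + 2 l'_{[k]}`). -/
theorem laufer_algorithm {J : Type*} [Fintype J] [DecidableEq J]
    (B : J → J → ℚ)
    (hsym : ∀ i j, B i j = B j i)
    (hoff : ∀ i j, i ≠ j → B i j = 0 ∨ B i j = 1)
    (hBint : ∀ i j, ∃ m : ℤ, B i j = m)
    (hconn : (SimpleGraph.fromRel fun i j => B i j = 1).Connected)
    (hneg : ∀ x : J → ℚ, x ≠ 0 → ∑ i, ∑ j, x i * B i j * x j < 0)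
    (l'k : J → ℚ)
    (hlkint : ∀ j, ∃ m : ℤ, ∑ i, l'k i * B i j = m)
    (hS : ∀ j, ∑ i, l'k i * B i j ≤ 0)
    (hmin : ∀ z : J → ℤ, (∀ j, ∑ i, (l'k i + z i) * B i j ≤ 0) → ∀ i, (0 : ℤ) ≤ z i)
    (x₀ : J → ℤ) (c : ℕ → J → ℤ) (hc0 : c 0 = x₀)
    (hstep : ∀ l, ¬ (∀ j, ∑ i, ((c l i : ℚ) + l'k i) * B i j ≤ 0) →
      ∃ j, 0 < ∑ i, ((c l i : ℚ) + l'k i) * B i j ∧ c (l + 1) = c l + Pi.single j 1)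
    (hstop : ∀ l, (∀ j, ∑ i, ((c l i : ℚ) + l'k i) * B i j ≤ 0) → c (l + 1) = c l) :
    (∃ t, ∀ j, ∑ i, ((c t i : ℚ) + l'k i) * B i j ≤ 0) ∧
    (∀ t, (∀ j, ∑ i, ((c t i : ℚ) + l'k i) * B i j ≤ 0) →
      ((∀ j, x₀ j ≤ c t j) ∧
        ∀ z : J → ℤ, (∀ j, x₀ j ≤ z j) → (∀ j, ∑ i, ((z i : ℚ) + l'k i) * B i j ≤ 0) →
          ∀ j, c t j ≤ z j)) ∧
    (∀ l, chiDist B l'k (c (l + 1)) ≤ chiDist B l'k (c l)) :=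
  laufer_algorithm_general B hsym hoff hBint hneg l'k hlkint x₀ c hc0 hstep hstop
end

section
/- With notation as in the continued fraction setup, suppose nonnegative integers a_1,...,a_s satisfy Σ_{t=i}^{j} n_{t+1,j} a_t < n_{ij} for all 1 ≤ i ≤ j ≤ s (and Σ_{t=i}^j n_{i,t-1} a_t < n_{ij}). Set a = Σ_{t=1}^s n_{t+1,s} a_t and q' = n_{1,s-1}, p = n_{1s}. Then ⌊a q'/p⌋ = Σ_{t=1}^s a_t n_{t+1,s-1} and {a q'/p} = (Σ_{t=1}^s a_t n_{1,t-1})/p. -/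
/-- with continuants `n_{ij}` of `p/q = [k_1,…,k_s]` and nonnegative
integers `a_1,…,a_s` satisfying the inequalities `∑_{t=i}^{j} n_{t+1,j} a_t < n_{ij}`
and `∑_{t=i}^{j} n_{i,t-1} a_t < n_{ij}`, set `a = ∑_t n_{t+1,s} a_t`, `p = n_{1s}`,
`q' = n_{1,s-1}`.  Then `⌊a q'/p⌋ = ∑_t a_t n_{t+1,s-1}` and
`{a q'/p} = (∑_t a_t n_{1,t-1})/p`. -/
theorem floor_fract_aq' (s : ℤ) (hs : 1 ≤ s) (k : ℤ → ℤ) (a : ℤ → ℤ)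
    (hk : ∀ i, 1 ≤ i → i ≤ s → 2 ≤ k i)
    (n' : ℤ → ℤ → ℤ)
    (hn1 : ∀ i, n' i (i - 1) = 1)
    (hn0 : ∀ i j, j < i - 1 → n' i j = 0)
    (hrec : ∀ i j, i ≤ j → j ≤ s → n' i j = k i * n' (i + 1) j - n' (i + 2) j)
    (hprod : ∀ j, 1 ≤ j → j ≤ s →
      n' 1 j * n' 2 s = n' 1 s * n' 2 j + n' (j + 2) s ∧
      n' j s * n' 1 (s - 1) = n' 1 s * n' j (s - 1) + n' 1 (j - 2))
    (ha : ∀ t, 1 ≤ t → t ≤ s → 0 ≤ a t)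
    (hineq1 : ∀ i j, 1 ≤ i → i ≤ j → j ≤ s →
      ∑ t ∈ Finset.Icc i j, n' (t + 1) j * a t < n' i j)
    (hineq2 : ∀ i j, 1 ≤ i → i ≤ j → j ≤ s →
      ∑ t ∈ Finset.Icc i j, n' i (t - 1) * a t < n' i j) :
    ⌊(((∑ t ∈ Finset.Icc 1 s, n' (t + 1) s * a t) * n' 1 (s - 1) : ℤ) : ℚ) / ((n' 1 s : ℤ) : ℚ)⌋
        = ∑ t ∈ Finset.Icc 1 s, a t * n' (t + 1) (s - 1) ∧
    Int.fract ((((∑ t ∈ Finset.Icc 1 s, n' (t + 1) s * a t) * n' 1 (s - 1) : ℤ) : ℚ)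
        / ((n' 1 s : ℤ) : ℚ))
      = (((∑ t ∈ Finset.Icc 1 s, a t * n' 1 (t - 1) : ℤ)) : ℚ) / ((n' 1 s : ℤ) : ℚ) := by
  -- positivity and monotonicity of continuants
  have key : ∀ d : ℕ, ∀ i j : ℤ, 1 ≤ i → i - 1 ≤ j → j ≤ s → (j + 1 - i).toNat = d →
      1 ≤ n' i j ∧ n' (i + 1) j ≤ n' i j := by
    intro d
    induction d using Nat.strong_induction_on with
    | _ d ih =>
      intro i j hi hij hjs hd
      rcases lt_or_ge j i with h | h
      · -- j = i - 1
        have hji : j = i - 1 := le_antisymm (by omega) hij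
        have h1 : n' i j = 1 := by rw [hji]; exact hn1 i
        have h0 : n' (i + 1) j = 0 := hn0 _ _ (by omega)
        omega
      · -- i ≤ j, use recursion
        have hd' : (j + 1 - (i + 1)).toNat < d := by omega
        obtain ⟨h1, h2⟩ := ih _ hd' (i + 1) j (by omega) (by omega) hjs rfl
        have hki : 2 ≤ k i := hk i hi (le_trans h hjs)
        have hr := hrec i j h hjs
        have hmul : 2 * n' (i + 1) j ≤ k i * n' (i + 1) j :=
          mul_le_mul_of_nonneg_right hki (by omega)
        have h2' : n' (i + 2) j ≤ n' (i + 1) j := by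
          rwa [show i + 1 + 1 = i + 2 from by ring] at h2
        constructor
        · omega
        · omega
  have hp : 1 ≤ n' 1 s := (key _ 1 s le_rfl (by omega) le_rfl rfl).1
  set p : ℤ := n' 1 s with hpdef
  set Q : ℤ := ∑ t ∈ Finset.Icc 1 s, a t * n' (t + 1) (s - 1) with hQdef
  set r : ℤ := ∑ t ∈ Finset.Icc 1 s, a t * n' 1 (t - 1) with hrdef
  -- the key identity
  have hid : (∑ t ∈ Finset.Icc 1 s, n' (t + 1) s * a t) * n' 1 (s - 1) = p * Q + r := by
    rw [Finset.sum_mul, hQdef, hrdef, Finset.mul_sum, ← Finset.sum_add_distrib]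
    apply Finset.sum_congr rfl
    intro t ht
    rw [Finset.mem_Icc] at ht
    rcases eq_or_lt_of_le ht.2 with heq | hlt
    · -- t = s
      subst heq
      have h1 : n' (t + 1) t = 1 := by have := hn1 (t + 1); simpa using this
      have h0 : n' (t + 1) (t - 1) = 0 := hn0 _ _ (by omega)
      rw [h1, h0]; ring
    · -- t < s, use hprod at t + 1
      have hpr := (hprod (t + 1) (by omega) (by omega)).2
      have : n' 1 (t + 1 - 2) = n' 1 (t - 1) := by ring_nf
      rw [this] at hpr
      calc n' (t + 1) s * a t * n' 1 (s - 1)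
          = (n' (t + 1) s * n' 1 (s - 1)) * a t := by ring
        _ = (p * n' (t + 1) (s - 1) + n' 1 (t - 1)) * a t := by rw [hpr]
        _ = p * (a t * n' (t + 1) (s - 1)) + a t * n' 1 (t - 1) := by ring
  -- bounds on r
  have hr0 : 0 ≤ r := by
    apply Finset.sum_nonneg
    intro t ht
    rw [Finset.mem_Icc] at ht
    have h1 : 0 ≤ n' 1 (t - 1) := by
      rcases lt_or_ge (t - 1) 0 with h | h
      · rw [hn0 1 (t - 1) (by omega)]
      · exact le_trans zero_le_one (key _ 1 (t - 1) le_rfl (by omega) (by omega) rfl).1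
    exact mul_nonneg (ha t ht.1 ht.2) h1
  have hrp : r < p := by
    have := hineq2 1 s le_rfl hs le_rfl
    calc r = ∑ t ∈ Finset.Icc 1 s, n' 1 (t - 1) * a t := by
            apply Finset.sum_congr rfl; intro t _; ring
      _ < p := this
  -- now compute floor and fract
  have hp0 : (0 : ℚ) < (p : ℚ) := by exact_mod_cast hp
  have hpne : (p : ℚ) ≠ 0 := ne_of_gt hp0
  have hdiv : (((∑ t ∈ Finset.Icc 1 s, n' (t + 1) s * a t) * n' 1 (s - 1) : ℤ) : ℚ) / (p : ℚ)
      = (Q : ℚ) + (r : ℚ) / (p : ℚ) := by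
    rw [hid]; push_cast; field_simp
  have hfr : (0 : ℚ) ≤ (r : ℚ) / (p : ℚ) ∧ (r : ℚ) / (p : ℚ) < 1 := by
    constructor
    · apply div_nonneg (by exact_mod_cast hr0) (le_of_lt hp0)
    · rw [div_lt_one hp0]; exact_mod_cast hrp
  constructor
  · rw [hdiv, Int.floor_intCast_add]
    have : ⌊(r : ℚ) / (p : ℚ)⌋ = 0 := by
      rw [Int.floor_eq_zero_iff]; exact ⟨hfr.1, hfr.2⟩
    omega
  · rw [hdiv, Int.fract_intCast_add, Int.fract_eq_self.mpr ⟨hfr.1, hfr.2⟩]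
end

section
/- For the lens space L(p,q) and the spin^c structure indexed by 0 ≤ a < p, one has χ(l'_{[-a g_s]}) = a(1-p)/(2p) + Σ_{j=1}^{a} {j q'/p}, where q q' ≡ 1 (mod p), 0 < q' < p. -/
/-!
Write `l'_a` for `l'_{[-a g_s]}`, `p = n_{1,s}`, `q' = n_{1,s-1}`, and induct on `a`. Elements
of `S_Q` are effective (a minimum principle for the chain), so `l'_0 = 0`. For the step to `a + 1`,
let `i` be the last vertex with `(l'_{a+1}, b_i) ≠ 0` (or `i = 0`). Then
`l'_a = l'_{a+1} + g_s + ∑_{t > i} b_t`: the right-hand side lies in `S_Q`, and if `x` is in the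
`a`-coset and in `S_Q` then `x - g_s - l'_{a+1}` is effective and integral, and a downward
induction from `t = s` forces it to be at least `1` at every `t > i`. As `l'_{a+1}` is orthogonal
to `b_t` for `t > i` and `χ(∑_{t > i} b_t) = (g_s, ∑_{t > i} b_t)`, expanding `χ` gives
`χ(l'_a) = χ(l'_{a+1}) + χ(g_s) - (l'_{a+1})_s` with `χ(g_s) = (p - 1)/(2p)`. Finally
`(l'_{a+1})_s ≡ (a + 1) q'/p (mod 1)` and `0 ≤ (l'_{a+1})_s < 1`, the upper bound by comparison
with the multiple `ρ (-g_1)`, `ρ = (a + 1) q' mod p`, of the first dual vector, which lies in the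
same coset thanks to the continuant identity `n_{1,t-1} ≡ q' n_{t+1,s} (mod p)`.
-/

/-- The Riemann–Roch function `χ(y) = -((K, y) + (y, y))/2` extended to `L ⊗ ℚ`,
where `K(b_j) = -(b_j, b_j) - 2`. -/
noncomputable def chiQ {J : Type*} [Fintype J] (B : J → J → ℤ) (y : J → ℚ) : ℚ :=
  (-(∑ j, y j * (-(B j j : ℚ) - 2)) - ∑ i, ∑ j, y i * (B i j : ℚ) * y j) / 2

theorem Finset.sum_Icc_one_sub_sub_one {G : Type*} [AddCommGroup G] (f : ℤ → G) {m : ℤ}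
    (hm : 0 ≤ m) : ∑ j ∈ Finset.Icc 1 m, (f j - f (j - 1)) = f m - f 0 := by
  induction m, hm using Int.leInduction with
  | base => simp
  | succ m hm ih =>
    rw [← Finset.insert_Icc_sub_one_right_eq_Icc (by omega), Finset.sum_insert (by simp),
      add_sub_cancel_right, ih, sub_add_sub_cancel]

structure IsContinuant (s : ℤ) (k : ℤ → ℤ) (n : ℤ → ℤ → ℤ) : Prop where
  apply_sub_one : ∀ i, n i (i - 1) = 1
  apply_of_lt : ∀ i j, j < i - 1 → n i j = 0
  recurrence : ∀ i j, i ≤ j → j ≤ s → n i j = k i * n (i + 1) j - n (i + 2) j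

namespace IsContinuant

variable {s : ℤ} {k : ℤ → ℤ} {n : ℤ → ℤ → ℤ}

theorem apply_add_one (hn : IsContinuant s k n) (i : ℤ) : n (i + 1) i = 1 := by
  simpa using hn.apply_sub_one (i + 1)

theorem apply_self (hn : IsContinuant s k n) {i : ℤ} (hi : i ≤ s) : n i i = k i := by
  rw [hn.recurrence i i le_rfl hi, hn.apply_add_one, hn.apply_of_lt (i + 2) i (by omega)]
  ring

theorem recurrence_right (hn : IsContinuant s k n) {i j : ℤ} (hij : i ≤ j) (hjs : j ≤ s) :
    n i j = k j * n i (j - 1) - n i (j - 2) := by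
  have hpair : ∀ i ≤ j - 1, n i j = k j * n i (j - 1) - n i (j - 2) ∧
      n (i + 1) j = k j * n (i + 1) (j - 1) - n (i + 1) (j - 2) := by
    intro i hi
    induction i, hi using Int.leInductionDown with
    | base =>
      have h := hn.recurrence (j - 1) j (by omega) hjs
      have h' := hn.apply_sub_one (j - 1)
      rw [sub_add_cancel, show j - 1 + 2 = j + 1 by ring, hn.apply_self hjs,
        hn.apply_add_one] at h
      rw [show j - 1 - 1 = j - 2 by ring] at h'
      rw [sub_add_cancel, hn.apply_self hjs, hn.apply_self (by omega), hn.apply_sub_one, h',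
        hn.apply_of_lt j (j - 2) (by omega), h]
      constructor <;> ring
    | pred i hi ih =>
      refine ⟨?_, by rw [sub_add_cancel]; exact ih.1⟩
      have h := hn.recurrence (i - 1) j (by omega) hjs
      have h1 := hn.recurrence (i - 1) (j - 1) (by omega) (by omega)
      have h2 := hn.recurrence (i - 1) (j - 2) (by omega) (by omega)
      rw [sub_add_cancel, show i - 1 + 2 = i + 1 by ring] at h h1 h2
      rw [h, h1, h2, ih.1, ih.2]
      ring
  rcases hij.lt_or_eq with h | rfl
  · exact (hpair i (by omega)).1
  · simpa using (hpair (i - 1) le_rfl).2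

theorem apply_sub_one_eq_mul_sub_mul (hn : IsContinuant s k n) {i t : ℤ} (hit : i - 1 ≤ t)
    (hts : t ≤ s) :
    n i (t - 1) = n i (s - 1) * n (t + 1) s - n i s * n (t + 1) (s - 1) := by
  have hpair : ∀ t ≤ s - 1, i - 1 ≤ t →
      n i (t - 1) = n i (s - 1) * n (t + 1) s - n i s * n (t + 1) (s - 1) ∧
      n i t = n i (s - 1) * n (t + 2) s - n i s * n (t + 2) (s - 1) := by
    intro t ht
    induction t, ht using Int.leInductionDown with
    | base =>
      intro hi
      rw [sub_add_cancel, show s - 1 + 2 = s + 1 by ring, hn.apply_self le_rfl,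
        hn.apply_sub_one s, hn.apply_add_one, hn.apply_of_lt (s + 1) (s - 1) (by omega),
        hn.recurrence_right (by omega) le_rfl, show s - 1 - 1 = s - 2 by ring]
      constructor <;> ring
    | pred t ht ih =>
      intro hi
      obtain ⟨ih1, ih2⟩ := ih (by omega)
      refine ⟨?_, by rw [show t - 1 + 2 = t + 1 by ring]; exact ih1⟩
      rw [sub_add_cancel, show t - 1 - 1 = t - 2 by ring]
      have h := hn.recurrence_right (i := i) (j := t) (by omega) (by omega)
      have hs1 := hn.recurrence t s (by omega) le_rfl
      have hs2 := hn.recurrence t (s - 1) (by omega) (by omega)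
      linear_combination h + k t * ih1 - ih2 - n i (s - 1) * hs1 + n i s * hs2
  rcases hts.lt_or_eq with h | rfl
  · exact (hpair t (by omega) hit).1
  · rw [hn.apply_add_one, hn.apply_of_lt (t + 1) (t - 1) (by omega)]
    ring

end IsContinuant

namespace ChainLattice

variable {s : ℤ} {k : ℤ → ℤ} {n : ℤ → ℤ → ℤ}

/-- `pairing k x j = (x, b_j)`, where `x = ∑ x_t b_t` lies in the lattice of the chain with
`(b_t, b_t) = -k_t`; lattice vectors are modelled as functions `ℤ → ℚ` supported on `[1, s]`. -/
def pairing (k : ℤ → ℤ) : (ℤ → ℚ) →ₗ[ℚ] ℤ → ℚ where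
  toFun x j := x (j - 1) + x (j + 1) - k j * x j
  map_add' x y := by ext j; simp only [Pi.add_apply]; ring
  map_smul' c x := by ext j; simp only [Pi.smul_apply, smul_eq_mul, RingHom.id_apply]; ring

@[simp]
theorem pairing_apply (x : ℤ → ℚ) (j : ℤ) :
    pairing k x j = x (j - 1) + x (j + 1) - k j * x j := rfl

noncomputable def form (s : ℤ) (k : ℤ → ℤ) (x y : ℤ → ℚ) : ℚ :=
  ∑ j ∈ Finset.Icc 1 s, x j * pairing k y j

noncomputable def chi (s : ℤ) (k : ℤ → ℤ) (x : ℤ → ℚ) : ℚ :=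
  (-(∑ j ∈ Finset.Icc 1 s, x j * ((k j : ℚ) - 2)) - form s k x x) / 2

theorem apply_eq_zero_of_support_subset {x : ℤ → ℚ} (hx : x.support ⊆ Set.Icc 1 s) {t : ℤ}
    (ht : t < 1 ∨ s < t) : x t = 0 :=
  Function.support_subset_iff'.mp hx t (by simp only [Set.mem_Icc]; omega)

theorem form_comm (hs : 0 ≤ s) {x y : ℤ → ℚ} (hx : x.support ⊆ Set.Icc 1 s)
    (hy : y.support ⊆ Set.Icc 1 s) : form s k x y = form s k y x := by
  -- the antisymmetric part telescopes to a boundary term, which vanishes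
  have := Finset.sum_Icc_one_sub_sub_one (fun j => x j * y (j + 1) - y j * x (j + 1)) hs
  simp only [apply_eq_zero_of_support_subset hx (t := 0) (by omega),
    apply_eq_zero_of_support_subset hy (t := 0) (by omega),
    apply_eq_zero_of_support_subset hx (t := s + 1) (by omega),
    apply_eq_zero_of_support_subset hy (t := s + 1) (by omega), mul_zero, zero_mul,
    sub_zero, sub_add_cancel] at this
  rw [form, form, ← sub_eq_zero, ← Finset.sum_sub_distrib, ← this]
  refine Finset.sum_congr rfl fun j _ => ?_
  simp only [pairing_apply]
  ring

theorem form_add_right (x y z : ℤ → ℚ) :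
    form s k x (y + z) = form s k x y + form s k x z := by
  simp only [form, map_add, Pi.add_apply, mul_add, Finset.sum_add_distrib]

theorem chi_add (hs : 0 ≤ s) {x y : ℤ → ℚ} (hx : x.support ⊆ Set.Icc 1 s)
    (hy : y.support ⊆ Set.Icc 1 s) :
    chi s k (x + y) = chi s k x + chi s k y - form s k x y := by
  have hxy := form_comm (k := k) hs hx hy
  simp only [chi, form, map_add, Pi.add_apply] at hxy ⊢
  simp only [add_mul, mul_add, Finset.sum_add_distrib]
  linarith

theorem nonneg_of_pairing_nonpos (hk : ∀ i, 1 ≤ i → i ≤ s → 2 ≤ k i) {v : ℤ → ℚ}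
    (hv : v.support ⊆ Set.Icc 1 s) (hpair : ∀ j ∈ Set.Icc 1 s, pairing k v j ≤ 0) :
    0 ≤ v := by
  by_contra hneg
  obtain ⟨t, ht⟩ : ∃ t, v t < 0 := by simpa [Pi.le_def] using hneg
  have hmem : ∀ t, v t ≠ 0 → t ∈ Finset.Icc 1 s := fun t h => by
    simpa using hv (Function.mem_support.mpr h)
  obtain ⟨t₁, -, hmin⟩ := (Finset.Icc 1 s).exists_min_image v ⟨t, hmem t ht.ne⟩
  have hglob : ∀ t', v t₁ ≤ v t' := fun t' => by
    by_cases ht' : t' ∈ Finset.Icc 1 s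
    · exact hmin t' ht'
    · rw [Function.support_subset_iff'.mp hv t' (by simpa using ht')]
      linarith [hmin t (hmem t ht.ne)]
  -- the largest minimiser has a strictly larger right neighbour
  obtain ⟨t₂, ht₂, hmax⟩ := Int.exists_greatest_of_bdd (P := fun t' => v t' = v t₁)
    ⟨s, fun t' h => (Finset.mem_Icc.mp (hmem t' (by linarith [hglob t]))).2⟩ ⟨t₁, rfl⟩
  have hI := Finset.mem_Icc.mp (hmem t₂ (by linarith [hglob t]))
  have hnext : v t₁ < v (t₂ + 1) :=
    lt_of_le_of_ne (hglob _) fun h => by linarith [hmax _ h.symm]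
  have hpt := hpair t₂ hI
  have hkt : (2 : ℚ) ≤ k t₂ := by exact_mod_cast hk t₂ hI.1 hI.2
  simp only [pairing_apply, ht₂] at hpt
  nlinarith [hglob (t₂ - 1), hglob t]

theorem eq_zero_of_pairing_eq_zero (hk : ∀ i, 1 ≤ i → i ≤ s → 2 ≤ k i) {v : ℤ → ℚ}
    (hv : v.support ⊆ Set.Icc 1 s) (hpair : ∀ j ∈ Set.Icc 1 s, pairing k v j = 0) : v = 0 :=
  le_antisymm
    (neg_nonneg.mp <| nonneg_of_pairing_nonpos hk (by rwa [Function.support_neg])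
      fun j hj => by simp only [map_neg, Pi.neg_apply, hpair j hj, neg_zero, le_refl])
    (nonneg_of_pairing_nonpos hk hv fun j hj => (hpair j hj).le)

theorem pairing_indicator {m j : ℤ} (hmj : m ≤ j) (hjs : j ≤ s) :
    pairing k ((Set.Icc m s).indicator 1) j =
      2 - k j - (if j = m then 1 else 0) - (if j = s then 1 else 0) := by
  simp only [pairing_apply, Set.indicator_apply, Set.mem_Icc, Pi.one_apply]
  split_ifs <;> first | omega | ring

/-- The adjunction formula in the form `K = -∑_t b_t - g_1 - g_s`. -/
theorem sum_mul_sub_two (hs : 1 ≤ s) (x : ℤ → ℚ) :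
    ∑ j ∈ Finset.Icc 1 s, x j * ((k j : ℚ) - 2) =
      -form s k x ((Set.Icc 1 s).indicator 1) - x 1 - x s := by
  have h : ∀ j ∈ Finset.Icc 1 s, x j * ((k j : ℚ) - 2) =
      -(x j * pairing k ((Set.Icc 1 s).indicator 1) j) - (if j = 1 then x j else 0) -
        (if j = s then x j else 0) := fun j hj => by
    rw [Finset.mem_Icc] at hj
    rw [pairing_indicator hj.1 hj.2]
    split_ifs <;> ring
  rw [Finset.sum_congr rfl h, Finset.sum_sub_distrib, Finset.sum_sub_distrib,
    Finset.sum_neg_distrib, Finset.sum_ite_eq', Finset.sum_ite_eq', if_pos (by simp [hs]),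
    if_pos (by simp [hs]), form]

theorem chi_indicator {m : ℤ} (hm : 1 ≤ m) :
    chi s k ((Set.Icc m s).indicator 1) = (Set.Icc m s).indicator 1 s := by
  set E : ℤ → ℚ := (Set.Icc m s).indicator 1
  have h : ∀ j ∈ Finset.Icc 1 s, E j * ((k j : ℚ) - 2) + E j * pairing k E j =
      -(if j = m then E j else 0) - (if j = s then E j else 0) := fun j hj => by
    by_cases hjm : j ∈ Set.Icc m s
    · rw [pairing_indicator hjm.1 hjm.2]
      split_ifs <;> ring
    · simp only [E, Set.indicator_of_notMem hjm]
      split_ifs <;> ring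
  have hsum := Finset.sum_congr rfl h
  rw [Finset.sum_add_distrib, Finset.sum_sub_distrib, Finset.sum_neg_distrib,
    Finset.sum_ite_eq', Finset.sum_ite_eq'] at hsum
  rw [chi, form, ← neg_add', hsum]
  simp only [E, Set.indicator_apply, Set.mem_Icc, Finset.mem_Icc, Pi.one_apply]
  split_ifs <;> first | omega | ring

/-- The vector `∑_t n_{1,t-1} b_t = -p g_s`. -/
noncomputable def continuantVec (s : ℤ) (n : ℤ → ℤ → ℤ) : ℤ → ℚ :=
  (Set.Icc 1 s).indicator fun t => (n 1 (t - 1) : ℚ)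

/-- The dual basis vector `g_s`. -/
noncomputable def dualLast (s : ℤ) (n : ℤ → ℤ → ℤ) : ℤ → ℚ :=
  -(n 1 s : ℚ)⁻¹ • continuantVec s n

theorem continuantVec_apply (hn : IsContinuant s k n) {t : ℤ} (h0 : 0 ≤ t) (hts : t ≤ s) :
    continuantVec s n t = n 1 (t - 1) := by
  rcases h0.lt_or_eq with h | rfl
  · exact Set.indicator_of_mem (Set.mem_Icc.mpr ⟨h, hts⟩) _
  · rw [continuantVec, Set.indicator_of_notMem (by simp), hn.apply_of_lt 1 _ (by omega),
      Int.cast_zero]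

theorem pairing_continuantVec (hn : IsContinuant s k n) {j : ℤ} (hj : j ∈ Set.Icc 1 s) :
    pairing k (continuantVec s n) j = if j = s then -(n 1 s : ℚ) else 0 := by
  obtain ⟨h1, hjs⟩ := hj
  have hrec : (n 1 j : ℚ) = k j * n 1 (j - 1) - n 1 (j - 2) := by
    exact_mod_cast hn.recurrence_right h1 hjs
  rw [pairing_apply, continuantVec_apply hn (by omega) (by omega),
    continuantVec_apply hn (by omega) hjs, show j - 1 - 1 = j - 2 by ring]
  split_ifs with hjs'
  · subst hjs'
    rw [continuantVec, Set.indicator_of_notMem (by simp)]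
    linear_combination hrec
  · rw [continuantVec_apply hn (by omega) (by omega), add_sub_cancel_right]
    linear_combination hrec

theorem continuant_pos (hs : 1 ≤ s) (hk : ∀ i, 1 ≤ i → i ≤ s → 2 ≤ k i)
    (hn : IsContinuant s k n) : 0 < n 1 s := by
  by_contra! hp
  -- otherwise `p g_s` would lie in `S_Q`, but its first coordinate is `-1`
  have h := nonneg_of_pairing_nonpos hk (v := -continuantVec s n)
    (by rw [Function.support_neg]; exact Set.support_indicator_subset) fun j hj => by
      rw [map_neg, Pi.neg_apply, pairing_continuantVec hn hj]
      split_ifs <;> simp [hp]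
  have h1 := h 1
  rw [Pi.zero_apply, Pi.neg_apply, continuantVec_apply hn zero_le_one hs, sub_self,
    show n 1 0 = 1 from hn.apply_sub_one 1] at h1
  norm_num at h1

theorem dualLast_support_subset : (dualLast s n).support ⊆ Set.Icc 1 s :=
  (Function.support_const_smul_subset _ _).trans Set.support_indicator_subset

theorem dualLast_apply (hn : IsContinuant s k n) {t : ℤ} (h0 : 0 ≤ t) (hts : t ≤ s) :
    dualLast s n t = -(n 1 (t - 1) : ℚ) / n 1 s := by
  rw [dualLast, Pi.smul_apply, continuantVec_apply hn h0 hts, smul_eq_mul]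
  ring

theorem pairing_dualLast (hs : 1 ≤ s) (hk : ∀ i, 1 ≤ i → i ≤ s → 2 ≤ k i)
    (hn : IsContinuant s k n) {j : ℤ} (hj : j ∈ Set.Icc 1 s) :
    pairing k (dualLast s n) j = if j = s then 1 else 0 := by
  have hp : (n 1 s : ℚ) ≠ 0 := by exact_mod_cast (continuant_pos hs hk hn).ne'
  rw [dualLast, map_smul, Pi.smul_apply, pairing_continuantVec hn hj, smul_eq_mul]
  split_ifs <;> simp [hp]

theorem form_dualLast (hs : 1 ≤ s) (hk : ∀ i, 1 ≤ i → i ≤ s → 2 ≤ k i)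
    (hn : IsContinuant s k n) (x : ℤ → ℚ) : form s k x (dualLast s n) = x s := by
  rw [form, Finset.sum_congr rfl fun j hj => by
    rw [pairing_dualLast hs hk hn (by simpa using hj), mul_ite, mul_one, mul_zero],
    Finset.sum_ite_eq', if_pos (by simp [hs])]

theorem chi_dualLast (hs : 1 ≤ s) (hk : ∀ i, 1 ≤ i → i ≤ s → 2 ≤ k i)
    (hn : IsContinuant s k n) :
    chi s k (dualLast s n) = ((n 1 s : ℚ) - 1) / (2 * n 1 s) := by
  have hp : (n 1 s : ℚ) ≠ 0 := by exact_mod_cast (continuant_pos hs hk hn).ne'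
  have hE : (Set.Icc 1 s).indicator (1 : ℤ → ℚ) s = 1 := by simp [hs]
  rw [chi, sum_mul_sub_two hs, form_comm (by omega) dualLast_support_subset
    Set.support_indicator_subset, form_dualLast hs hk hn, form_dualLast hs hk hn, hE,
    dualLast_apply hn zero_le_one hs, dualLast_apply hn (by omega) le_rfl, sub_self,
    show n 1 0 = 1 from hn.apply_sub_one 1]
  field_simp
  ring

def intLattice : AddSubgroup (ℤ → ℚ) := ((Int.castAddHom ℚ).compLeft ℤ).range

theorem mem_intLattice {x : ℤ → ℚ} : x ∈ intLattice ↔ ∀ t, ∃ m : ℤ, x t = m :=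
  ⟨fun ⟨z, hz⟩ t => ⟨z t, hz ▸ rfl⟩,
    fun h => ⟨fun t => (h t).choose, funext fun t => (h t).choose_spec.symm⟩⟩

theorem indicator_one_mem_intLattice (m : ℤ) : (Set.Icc m s).indicator 1 ∈ intLattice :=
  mem_intLattice.mpr fun t => by
    by_cases ht : t ∈ Set.Icc m s
    · exact ⟨1, by simp [ht]⟩
    · exact ⟨0, by simp [ht]⟩

theorem pairing_mem_intLattice {x : ℤ → ℚ} (hx : x ∈ intLattice) :
    pairing k x ∈ intLattice := by
  rw [mem_intLattice] at hx ⊢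
  intro j
  obtain ⟨a, ha⟩ := hx (j - 1)
  obtain ⟨b, hb⟩ := hx (j + 1)
  obtain ⟨c, hc⟩ := hx j
  exact ⟨a + b - k j * c, by rw [pairing_apply, ha, hb, hc]; push_cast; ring⟩

/-- The set `(-a g_s + L) ∩ S_Q`. -/
def cosetCone (s : ℤ) (k : ℤ → ℤ) (n : ℤ → ℤ → ℤ) (a : ℤ) : Set (ℤ → ℚ) :=
  {y | y.support ⊆ Set.Icc 1 s ∧ y + a • dualLast s n ∈ intLattice ∧
    ∀ j ∈ Set.Icc 1 s, pairing k y j ≤ 0}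

theorem sub_dualLast_mem_cosetCone (hs : 1 ≤ s) (hk : ∀ i, 1 ≤ i → i ≤ s → 2 ≤ k i)
    (hn : IsContinuant s k n) {a : ℤ} {x : ℤ → ℚ} (hx : x ∈ cosetCone s k n a) :
    x - dualLast s n ∈ cosetCone s k n (a + 1) := by
  obtain ⟨hsupp, hlat, hpair⟩ := hx
  refine ⟨(Function.support_sub _ _).trans (Set.union_subset hsupp dualLast_support_subset),
    ?_, fun j hj => ?_⟩
  · rwa [add_zsmul, one_zsmul, sub_add_add_cancel]
  · rw [map_sub, Pi.sub_apply, pairing_dualLast hs hk hn hj]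
    split_ifs <;> linarith [hpair j hj]

theorem exists_pairing_eq_intCast (hs : 1 ≤ s) (hk : ∀ i, 1 ≤ i → i ≤ s → 2 ≤ k i)
    (hn : IsContinuant s k n) {a : ℤ} {x : ℤ → ℚ} (hx : x ∈ cosetCone s k n a) {j : ℤ}
    (hj : j ∈ Set.Icc 1 s) : ∃ m : ℤ, pairing k x j = m := by
  obtain ⟨m, hm⟩ := mem_intLattice.mp (pairing_mem_intLattice (k := k) hx.2.1) j
  rw [map_add, map_zsmul, Pi.add_apply, Pi.smul_apply, pairing_dualLast hs hk hn hj] at hm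
  refine ⟨m - if j = s then a else 0, ?_⟩
  split_ifs at hm ⊢ <;> simp only [zsmul_eq_mul, mul_one, smul_zero, add_zero] at hm <;>
    push_cast <;> linarith

theorem isLeast_cosetCone_zero (hk : ∀ i, 1 ≤ i → i ≤ s → 2 ≤ k i) :
    IsLeast (cosetCone s k n 0) 0 :=
  ⟨⟨by simp, by simp [zero_mem], fun j _ => by simp⟩,
    fun _ hy => nonneg_of_pairing_nonpos hk hy.1 hy.2.2⟩

/-- The vector `-g_1`. -/
noncomputable def negDualFirst (s : ℤ) (n : ℤ → ℤ → ℤ) : ℤ → ℚ :=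
  (n 1 s : ℚ)⁻¹ • (Set.Icc 1 s).indicator fun t => (n (t + 1) s : ℚ)

theorem negDualFirst_apply (hn : IsContinuant s k n) {t : ℤ} (h1 : 1 ≤ t) (hts : t ≤ s + 1) :
    negDualFirst s n t = n (t + 1) s / n 1 s := by
  rw [negDualFirst, Pi.smul_apply, smul_eq_mul, inv_mul_eq_div]
  rcases hts.lt_or_eq with h | rfl
  · rw [Set.indicator_of_mem (Set.mem_Icc.mpr ⟨h1, by omega⟩)]
  · rw [Set.indicator_of_notMem (by simp), hn.apply_of_lt (s + 1 + 1) s (by omega),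
      Int.cast_zero]

theorem pairing_negDualFirst (hs : 1 ≤ s) (hk : ∀ i, 1 ≤ i → i ≤ s → 2 ≤ k i)
    (hn : IsContinuant s k n) {j : ℤ} (hj : j ∈ Set.Icc 1 s) :
    pairing k (negDualFirst s n) j = if j = 1 then -1 else 0 := by
  obtain ⟨h1, hjs⟩ := hj
  have hp : (n 1 s : ℚ) ≠ 0 := by exact_mod_cast (continuant_pos hs hk hn).ne'
  have hrec : (n j s : ℚ) = k j * n (j + 1) s - n (j + 2) s := by
    exact_mod_cast hn.recurrence j s hjs le_rfl
  rw [pairing_apply, negDualFirst_apply hn (t := j + 1) (by omega) (by omega),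
    negDualFirst_apply hn h1 (by omega), add_assoc, one_add_one_eq_two]
  split_ifs with hj1
  · subst hj1
    rw [negDualFirst, Pi.smul_apply, Set.indicator_of_notMem (by simp), smul_zero]
    field_simp
    linear_combination hrec
  · rw [negDualFirst_apply hn (t := j - 1) (by omega) (by omega), sub_add_cancel]
    field_simp
    linear_combination hrec

theorem smul_negDualFirst_mem_cosetCone (hs : 1 ≤ s) (hk : ∀ i, 1 ≤ i → i ≤ s → 2 ≤ k i)
    (hn : IsContinuant s k n) {a ρ : ℤ} (hρ : 0 ≤ ρ) (hρa : ρ ≡ a * n 1 (s - 1) [ZMOD n 1 s]) :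
    (ρ : ℚ) • negDualFirst s n ∈ cosetCone s k n a := by
  obtain ⟨c, hc⟩ := hρa.dvd
  refine ⟨(Function.support_const_smul_subset _ _).trans
    ((Function.support_const_smul_subset _ _).trans Set.support_indicator_subset),
    mem_intLattice.mpr fun t => ?_, fun j hj => ?_⟩
  · by_cases ht : t ∈ Set.Icc 1 s
    · refine ⟨a * n (t + 1) (s - 1) - c * n (t + 1) s, ?_⟩
      have hp : (n 1 s : ℚ) ≠ 0 := by exact_mod_cast (continuant_pos hs hk hn).ne'
      have hmod : (ρ : ℚ) = a * n 1 (s - 1) - n 1 s * c := by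
        exact_mod_cast (show ρ = a * n 1 (s - 1) - n 1 s * c by linarith)
      have hcross : (n 1 (t - 1) : ℚ) =
          n 1 (s - 1) * n (t + 1) s - n 1 s * n (t + 1) (s - 1) := by
        exact_mod_cast hn.apply_sub_one_eq_mul_sub_mul (by linarith [ht.1]) ht.2
      rw [Pi.add_apply, Pi.smul_apply, Pi.smul_apply, smul_eq_mul, zsmul_eq_mul,
        negDualFirst_apply hn ht.1 (by linarith [ht.2]),
        dualLast_apply hn (by linarith [ht.1]) ht.2, hcross, hmod]
      field_simp
      push_cast
      ring
    · refine ⟨0, ?_⟩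
      rw [Pi.add_apply, Pi.smul_apply, Pi.smul_apply,
        Function.support_subset_iff'.mp (dualLast_support_subset (n := n)) t ht,
        negDualFirst, Pi.smul_apply, Set.indicator_of_notMem ht]
      simp
  · rw [map_smul, Pi.smul_apply, pairing_negDualFirst hs hk hn hj, smul_eq_mul]
    have : (0 : ℚ) ≤ ρ := by exact_mod_cast hρ
    split_ifs <;> linarith

theorem apply_last_eq_fract (hs : 1 ≤ s) (hk : ∀ i, 1 ≤ i → i ≤ s → 2 ≤ k i)
    (hn : IsContinuant s k n) {a : ℤ} {v : ℤ → ℚ} (hv : IsLeast (cosetCone s k n a) v) :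
    v s = Int.fract (((a * n 1 (s - 1) : ℤ) : ℚ) / (n 1 s : ℚ)) := by
  have hp := continuant_pos hs hk hn
  set ρ := a * n 1 (s - 1) % n 1 s
  have hup := hv.2 (smul_negDualFirst_mem_cosetCone hs hk hn (Int.emod_nonneg _ hp.ne')
    (Int.mod_modEq _ _)) s
  rw [Pi.smul_apply, negDualFirst_apply hn hs (by omega), hn.apply_add_one, smul_eq_mul,
    Int.cast_one, mul_one_div] at hup
  have hρp : (ρ : ℚ) < n 1 s := by exact_mod_cast Int.emod_lt_of_pos _ hp
  have hp' : (0 : ℚ) < n 1 s := by exact_mod_cast hp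
  obtain ⟨m, hm⟩ := mem_intLattice.mp hv.1.2.1 s
  rw [Pi.add_apply, Pi.smul_apply, zsmul_eq_mul, dualLast_apply hn (by omega) le_rfl] at hm
  rw [eq_comm, Int.fract_eq_iff]
  refine ⟨nonneg_of_pairing_nonpos hk hv.1.1 hv.1.2.2 s,
    hup.trans_lt ((div_lt_one hp').mpr hρp), -m, ?_⟩
  rw [Int.cast_neg, ← hm]
  push_cast
  ring

theorem add_dualLast_add_indicator_mem (hs : 1 ≤ s) (hk : ∀ i, 1 ≤ i → i ≤ s → 2 ≤ k i)
    (hn : IsContinuant s k n) {a i : ℤ} {v : ℤ → ℚ} (hv : v ∈ cosetCone s k n (a + 1))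
    (hi : 0 ≤ i) (his : i ≤ s) (hvi : 1 ≤ i → pairing k v i ≤ -1)
    (hvj : ∀ j, i < j → j ≤ s → pairing k v j = 0) :
    v + dualLast s n + (Set.Icc (i + 1) s).indicator 1 ∈ cosetCone s k n a := by
  obtain ⟨hsupp, hlat, hpair⟩ := hv
  refine ⟨(Function.support_add _ _).trans (Set.union_subset
      ((Function.support_add _ _).trans (Set.union_subset hsupp dualLast_support_subset))
      (Set.support_indicator_subset.trans (Set.Icc_subset_Icc_left (by omega)))), ?_,
    fun j hj => ?_⟩
  · have : v + dualLast s n + (Set.Icc (i + 1) s).indicator 1 + a • dualLast s n =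
        v + (a + 1) • dualLast s n + (Set.Icc (i + 1) s).indicator 1 := by
      rw [add_zsmul, one_zsmul]; abel
    rw [this]
    exact add_mem hlat (indicator_one_mem_intLattice _)
  obtain ⟨hj1, hjs⟩ := id hj
  have hkj : (2 : ℚ) ≤ k j := by exact_mod_cast hk j hj1 hjs
  rw [map_add, map_add, Pi.add_apply, Pi.add_apply, pairing_dualLast hs hk hn hj]
  rcases lt_trichotomy j i with hji | rfl | hji
  · have hE : pairing k ((Set.Icc (i + 1) s).indicator 1) j = 0 := by
      simp only [pairing_apply, Set.indicator_apply, Set.mem_Icc]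
      split_ifs <;> first | omega | simp
    rw [hE, if_neg (by omega)]
    linarith [hpair j hj]
  · have hE : pairing k ((Set.Icc (j + 1) s).indicator 1) j = if j = s then 0 else 1 := by
      simp only [pairing_apply, Set.indicator_apply, Set.mem_Icc]
      split_ifs <;> first | omega | simp
    have := hvi hj1
    split_ifs at hE ⊢ <;> linarith
  · rw [hvj j hji hjs, pairing_indicator (by omega) hjs]
    split_ifs <;> linarith

theorem add_dualLast_add_one_le (hs : 1 ≤ s) (hk : ∀ i, 1 ≤ i → i ≤ s → 2 ≤ k i)
    (hn : IsContinuant s k n) {a i : ℤ} {v x : ℤ → ℚ}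
    (hv : IsLeast (cosetCone s k n (a + 1)) v) (hx : x ∈ cosetCone s k n a) (hi : 0 ≤ i)
    (hvj : ∀ j, i < j → j ≤ s → pairing k v j = 0) {j : ℤ} (hij : i < j) (hjs : j ≤ s) :
    v j + dualLast s n j + 1 ≤ x j := by
  set G := x - dualLast s n - v with hG
  have hG0 : ∀ t, 0 ≤ G t := fun t => by
    simpa [hG] using sub_nonneg.mpr (hv.2 (sub_dualLast_mem_cosetCone hs hk hn hx) t)
  have hGint : G ∈ intLattice := by
    have : G = (x + a • dualLast s n) - (v + (a + 1) • dualLast s n) := by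
      rw [hG, add_zsmul, one_zsmul]; abel
    exact this ▸ sub_mem hx.2.1 hv.1.2.1
  -- a zero of `G` at `t` would force `(x, b_t) ≥ G_{t+1} + [t = s] > 0`
  have step : ∀ t, i < t → t ≤ s → (t = s ∨ 1 ≤ G (t + 1)) → 1 ≤ G t := by
    intro t hit hts hnext
    obtain ⟨m, hm⟩ := mem_intLattice.mp hGint t
    by_contra! hlt
    have hm0 : m = 0 := by
      have h0 := hG0 t
      rw [hm] at hlt h0
      have : (0 : ℤ) ≤ m := by exact_mod_cast h0
      have : m < 1 := by exact_mod_cast hlt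
      omega
    have hx' : x = v + dualLast s n + G := by rw [hG]; abel
    have hpx := hx.2.2 t ⟨by omega, hts⟩
    rw [hx', map_add, map_add, Pi.add_apply, Pi.add_apply, hvj t hit hts,
      pairing_dualLast hs hk hn ⟨by omega, hts⟩, pairing_apply, hm, hm0] at hpx
    have := hG0 (t - 1)
    have := hG0 (t + 1)
    rcases hnext with rfl | hnext
    · simp only [if_true] at hpx; push_cast at hpx; linarith
    · split_ifs at hpx <;> push_cast at hpx <;> linarith
  have hdown : ∀ t ≤ s, i < t → 1 ≤ G t := by
    intro t hts
    induction t, hts using Int.leInductionDown with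
    | base => exact fun hit => step s hit le_rfl (Or.inl rfl)
    | pred t ht ih =>
      exact fun hit => step _ hit (by omega) (Or.inr (by rw [sub_add_cancel]; exact ih (by omega)))
  have := hdown j hjs hij
  simp only [hG, Pi.sub_apply] at this
  linarith

/-- The inductive formula `l'_{[-a g_s]} = l'_{[-(a+1) g_s]} + g_s + ∑_{t=i+1}^{s} b_t`, where `i`
is the last vertex with `(l'_{[-(a+1) g_s]}, b_i) ≠ 0` (or `i = 0`). -/
theorem exists_isLeast_add_dualLast_add_indicator (hs : 1 ≤ s)
    (hk : ∀ i, 1 ≤ i → i ≤ s → 2 ≤ k i) (hn : IsContinuant s k n) {a : ℤ} {v : ℤ → ℚ}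
    (hv : IsLeast (cosetCone s k n (a + 1)) v) :
    ∃ m, 1 ≤ m ∧ (∀ j, m ≤ j → j ≤ s → pairing k v j = 0) ∧
      IsLeast (cosetCone s k n a) (v + dualLast s n + (Set.Icc m s).indicator 1) := by
  obtain ⟨i, ⟨hi0, his, hi⟩, hmax⟩ := Int.exists_greatest_of_bdd
    (P := fun i => 0 ≤ i ∧ i ≤ s ∧ (i = 0 ∨ pairing k v i ≠ 0))
    ⟨s, fun _ h => h.2.1⟩ ⟨0, le_rfl, by omega, Or.inl rfl⟩
  have hvj : ∀ j, i < j → j ≤ s → pairing k v j = 0 := fun j hij hjs => by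
    by_contra h
    linarith [hmax j ⟨by omega, hjs, Or.inr h⟩]
  have hvi : 1 ≤ i → pairing k v i ≤ -1 := fun h1 => by
    obtain ⟨m, hm⟩ := exists_pairing_eq_intCast hs hk hn hv.1 ⟨h1, his⟩
    have hle := hv.1.2.2 i ⟨h1, his⟩
    have hne := hi.resolve_left (by omega)
    rw [hm] at hle hne ⊢
    have : m ≤ 0 := by exact_mod_cast hle
    have : m ≠ 0 := by exact_mod_cast hne
    exact_mod_cast (show m ≤ -1 by omega)
  refine ⟨i + 1, by omega, fun j hj hjs => hvj j (by omega) hjs,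
    add_dualLast_add_indicator_mem hs hk hn hv.1 hi0 his hvi hvj, fun x hx t => ?_⟩
  have hle := hv.2 (sub_dualLast_mem_cosetCone hs hk hn hx) t
  simp only [Pi.add_apply, Pi.sub_apply, Set.indicator_apply, Set.mem_Icc, Pi.one_apply] at hle ⊢
  split_ifs with ht
  · exact add_dualLast_add_one_le hs hk hn hv hx hi0 hvj (by omega) ht.2
  · linarith

theorem chi_add_dualLast_add_indicator (hs : 1 ≤ s) (hk : ∀ i, 1 ≤ i → i ≤ s → 2 ≤ k i)
    (hn : IsContinuant s k n) {v : ℤ → ℚ} (hv : v.support ⊆ Set.Icc 1 s) {m : ℤ} (hm : 1 ≤ m)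
    (hvm : ∀ j, m ≤ j → j ≤ s → pairing k v j = 0) :
    chi s k (v + dualLast s n + (Set.Icc m s).indicator 1) =
      chi s k v + chi s k (dualLast s n) - v s := by
  have hE : ((Set.Icc m s).indicator (1 : ℤ → ℚ)).support ⊆ Set.Icc 1 s :=
    Set.support_indicator_subset.trans (Set.Icc_subset_Icc_left hm)
  have hvg : (v + dualLast s n).support ⊆ Set.Icc 1 s :=
    (Function.support_add _ _).trans (Set.union_subset hv dualLast_support_subset)
  have hEv : form s k ((Set.Icc m s).indicator 1) v = 0 :=
    Finset.sum_eq_zero fun j hj => by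
      rw [Finset.mem_Icc] at hj
      by_cases hjm : m ≤ j
      · rw [hvm j hjm hj.2, mul_zero]
      · rw [Set.indicator_of_notMem (by simp [hjm]), zero_mul]
  rw [chi_add (by omega) hvg hE, chi_add (by omega) hv dualLast_support_subset,
    chi_indicator hm, form_comm (by omega) hvg hE, form_add_right, hEv,
    form_dualLast hs hk hn, form_dualLast hs hk hn]
  ring

theorem chi_eq_of_isLeast (hs : 1 ≤ s) (hk : ∀ i, 1 ≤ i → i ≤ s → 2 ≤ k i)
    (hn : IsContinuant s k n) {a : ℤ} (ha : 0 ≤ a) {v : ℤ → ℚ}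
    (hv : IsLeast (cosetCone s k n a) v) :
    chi s k v = ((a : ℚ) * (1 - (n 1 s : ℚ))) / (2 * (n 1 s : ℚ)) +
      ∑ j ∈ Finset.Icc (1 : ℤ) a,
        Int.fract (((j * n 1 (s - 1) : ℤ) : ℚ) / ((n 1 s : ℤ) : ℚ)) := by
  induction a, ha using Int.leInduction generalizing v with
  | base =>
    rw [hv.unique (isLeast_cosetCone_zero hk)]
    simp [chi, form]
  | succ a ha ih =>
    obtain ⟨m, hm, hvm, hw⟩ := exists_isLeast_add_dualLast_add_indicator hs hk hn hv
    have hp : (n 1 s : ℚ) ≠ 0 := by exact_mod_cast (continuant_pos hs hk hn).ne'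
    have h := ih hw
    rw [chi_add_dualLast_add_indicator hs hk hn hv.1.1 hm hvm, chi_dualLast hs hk hn,
      apply_last_eq_fract hs hk hn hv] at h
    rw [← Finset.insert_Icc_sub_one_right_eq_Icc (by omega), Finset.sum_insert (by simp),
      add_sub_cancel_right]
    push_cast at h ⊢
    field_simp at h ⊢
    linear_combination h

theorem extend_apply_of_mem (f : Finset.Icc (1 : ℤ) s → ℚ) {t : ℤ} (ht : t ∈ Finset.Icc 1 s) :
    Function.extend Subtype.val f 0 t = f ⟨t, ht⟩ :=
  Subtype.val_injective.extend_apply f 0 ⟨t, ht⟩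

theorem extend_apply_of_notMem (f : Finset.Icc (1 : ℤ) s → ℚ) {t : ℤ}
    (ht : t ∉ Finset.Icc 1 s) : Function.extend Subtype.val f 0 t = 0 :=
  Function.extend_apply' _ _ _ fun ⟨i, hi⟩ => ht (hi ▸ i.2)

theorem extend_support_subset (f : Finset.Icc (1 : ℤ) s → ℚ) :
    (Function.extend Subtype.val f 0).support ⊆ Set.Icc 1 s :=
  Function.support_subset_iff'.mpr fun _ ht => extend_apply_of_notMem f (by simpa using ht)

def IsChainMatrix (s : ℤ) (k : ℤ → ℤ) (B : Finset.Icc (1 : ℤ) s → Finset.Icc (1 : ℤ) s → ℤ) :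
    Prop :=
  ∀ i j : Finset.Icc (1 : ℤ) s, B i j =
    if (i : ℤ) = (j : ℤ) then -(k (i : ℤ))
    else if (i : ℤ) = (j : ℤ) + 1 ∨ (j : ℤ) = (i : ℤ) + 1 then 1 else 0

variable {B : Finset.Icc (1 : ℤ) s → Finset.Icc (1 : ℤ) s → ℤ}

theorem sum_mul_eq_pairing (hB : IsChainMatrix s k B) (f : Finset.Icc (1 : ℤ) s → ℚ)
    (j : Finset.Icc (1 : ℤ) s) :
    ∑ i, f i * (B i j : ℚ) = pairing k (Function.extend Subtype.val f 0) j := by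
  set F := Function.extend Subtype.val f 0
  have hF : ∀ t, (if t ∈ Finset.Icc 1 s then F t else 0) = F t := fun t => by
    split_ifs with ht
    · rfl
    · exact (extend_apply_of_notMem f ht).symm
  calc ∑ i, f i * (B i j : ℚ)
      = ∑ i : Finset.Icc (1 : ℤ) s, ((if (i : ℤ) = j - 1 then F i else 0) +
          (if (i : ℤ) = j + 1 then F i else 0) - (if (i : ℤ) = j then k j * F i else 0)) := by
        refine Finset.sum_congr rfl fun i _ => ?_
        rw [hB, show f i = F i from (Subtype.val_injective.extend_apply f 0 i).symm]
        split_ifs with h <;> first | omega | (rw [h]; push_cast; ring) | (push_cast; ring)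
    _ = F (j - 1) + F (j + 1) - k j * F j := by
        rw [Finset.sum_coe_sort (Finset.Icc 1 s) fun t => (if t = (j : ℤ) - 1 then F t else 0) +
          (if t = (j : ℤ) + 1 then F t else 0) - (if t = (j : ℤ) then k j * F t else 0),
          Finset.sum_sub_distrib, Finset.sum_add_distrib, Finset.sum_ite_eq', Finset.sum_ite_eq',
          Finset.sum_ite_eq', hF, hF, if_pos j.2]

theorem chiQ_eq_chi (hB : IsChainMatrix s k B) (f : Finset.Icc (1 : ℤ) s → ℚ) :
    chiQ B f = chi s k (Function.extend Subtype.val f 0) := by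
  set F := Function.extend Subtype.val f 0
  have hf : ∀ i, f i = F i := fun i => (Subtype.val_injective.extend_apply f 0 i).symm
  have hK : ∑ j, f j * (-(B j j : ℚ) - 2) = ∑ t ∈ Finset.Icc 1 s, F t * ((k t : ℚ) - 2) := by
    rw [← Finset.sum_coe_sort (Finset.Icc 1 s) fun t => F t * ((k t : ℚ) - 2)]
    refine Finset.sum_congr rfl fun j _ => ?_
    rw [hB, if_pos rfl, hf]
    push_cast
    ring
  have hform : ∑ i, ∑ j, f i * (B i j : ℚ) * f j = form s k F F := by
    rw [Finset.sum_comm, form,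
      ← Finset.sum_coe_sort (Finset.Icc 1 s) fun t => F t * pairing k F t]
    refine Finset.sum_congr rfl fun j _ => ?_
    rw [← Finset.sum_mul, sum_mul_eq_pairing hB, hf, mul_comm]
  rw [chiQ, chi, hK, hform]

theorem extend_eq_dualLast (hs : 1 ≤ s) (hk : ∀ i, 1 ≤ i → i ≤ s → 2 ≤ k i)
    (hn : IsContinuant s k n) (hB : IsChainMatrix s k B) {gs : Finset.Icc (1 : ℤ) s → ℚ}
    (hgs : ∀ j : Finset.Icc (1 : ℤ) s, ∑ i, gs i * (B i j : ℚ) = if (j : ℤ) = s then 1 else 0) :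
    Function.extend Subtype.val gs 0 = dualLast s n :=
  sub_eq_zero.mp <| eq_zero_of_pairing_eq_zero hk
    ((Function.support_sub _ _).trans
      (Set.union_subset (extend_support_subset gs) dualLast_support_subset))
    fun j hj => by
      have h := hgs ⟨j, by simpa using hj⟩
      rw [sum_mul_eq_pairing hB] at h
      rw [map_sub, Pi.sub_apply, h, pairing_dualLast hs hk hn hj, sub_self]

theorem extend_mem_cosetCone_iff (hB : IsChainMatrix s k B) {gs : Finset.Icc (1 : ℤ) s → ℚ}
    (hg : Function.extend Subtype.val gs 0 = dualLast s n) (a : ℤ)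
    (f : Finset.Icc (1 : ℤ) s → ℚ) :
    Function.extend Subtype.val f 0 ∈ cosetCone s k n a ↔
      (∃ x : Finset.Icc (1 : ℤ) s → ℤ, f = fun i => -(a : ℚ) * gs i + x i) ∧
        ∀ j, ∑ i, f i * (B i j : ℚ) ≤ 0 := by
  simp only [cosetCone, Set.mem_ofPred_eq, extend_support_subset f, true_and,
    sum_mul_eq_pairing hB, mem_intLattice, ← hg, Pi.add_apply, Pi.smul_apply]
  simp only [zsmul_eq_mul]
  refine and_congr ⟨fun h => ?_, fun ⟨x, hx⟩ t => ?_⟩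
    ⟨fun h j => h j (Finset.mem_Icc.mp j.2), fun h j hj => h ⟨j, Finset.mem_Icc.mpr hj⟩⟩
  · choose z hz using h
    refine ⟨fun i => z i, funext fun i => ?_⟩
    have := hz i
    rw [Subtype.val_injective.extend_apply, Subtype.val_injective.extend_apply] at this
    linarith
  · by_cases ht : t ∈ Finset.Icc 1 s
    · refine ⟨x ⟨t, ht⟩, ?_⟩
      rw [extend_apply_of_mem f ht, extend_apply_of_mem gs ht, hx]
      ring
    · exact ⟨0, by rw [extend_apply_of_notMem f ht, extend_apply_of_notMem gs ht]; simp⟩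

theorem isLeast_extend (hB : IsChainMatrix s k B) {gs : Finset.Icc (1 : ℤ) s → ℚ}
    (hg : Function.extend Subtype.val gs 0 = dualLast s n) {a : ℤ}
    {l : Finset.Icc (1 : ℤ) s → ℚ}
    (hmem : ∃ x : Finset.Icc (1 : ℤ) s → ℤ, l = fun i => -(a : ℚ) * gs i + x i)
    (hS : ∀ j, ∑ i, l i * (B i j : ℚ) ≤ 0)
    (hmin : ∀ y : Finset.Icc (1 : ℤ) s → ℚ,
      (∃ x : Finset.Icc (1 : ℤ) s → ℤ, y = fun i => -(a : ℚ) * gs i + x i) →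
      (∀ j, ∑ i, y i * (B i j : ℚ) ≤ 0) → ∀ i, l i ≤ y i) :
    IsLeast (cosetCone s k n a) (Function.extend Subtype.val l 0) := by
  refine ⟨(extend_mem_cosetCone_iff hB hg a l).mpr ⟨hmem, hS⟩, fun y hy t => ?_⟩
  have hy0 : ∀ t ∉ Finset.Icc 1 s, y t = 0 := fun t ht =>
    apply_eq_zero_of_support_subset hy.1 (by rw [Finset.mem_Icc] at ht; omega)
  have hyl : Function.extend Subtype.val (fun i : Finset.Icc (1 : ℤ) s => y i) 0 = y :=
    funext fun t => by
      by_cases ht : t ∈ Finset.Icc 1 s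
      · exact extend_apply_of_mem _ ht
      · rw [extend_apply_of_notMem _ ht, hy0 t ht]
  obtain ⟨hcoset, hpair⟩ := (extend_mem_cosetCone_iff hB hg a _).mp (hyl ▸ hy)
  by_cases ht : t ∈ Finset.Icc 1 s
  · rw [extend_apply_of_mem l ht]
    exact hmin _ hcoset hpair ⟨t, ht⟩
  · rw [extend_apply_of_notMem l ht, hy0 t ht]

end ChainLattice

open ChainLattice

theorem lens_chi_min_rep_general (s : ℤ) (hs : 1 ≤ s) (k : ℤ → ℤ) (n : ℤ → ℤ → ℤ)
    (hk : ∀ i, 1 ≤ i → i ≤ s → 2 ≤ k i)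
    (hn1 : ∀ i, n i (i - 1) = 1)
    (hn0 : ∀ i j, j < i - 1 → n i j = 0)
    (hrec : ∀ i j, i ≤ j → j ≤ s → n i j = k i * n (i + 1) j - n (i + 2) j)
    (B : ↥(Finset.Icc (1 : ℤ) s) → ↥(Finset.Icc (1 : ℤ) s) → ℤ)
    (hB : ∀ i j : ↥(Finset.Icc (1 : ℤ) s), B i j =
      if (i : ℤ) = (j : ℤ) then -(k (i : ℤ))
      else if (i : ℤ) = (j : ℤ) + 1 ∨ (j : ℤ) = (i : ℤ) + 1 then 1 else 0)
    (gs : ↥(Finset.Icc (1 : ℤ) s) → ℚ)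
    (hgs : ∀ j : ↥(Finset.Icc (1 : ℤ) s),
      ∑ i, gs i * (B i j : ℚ) = if (j : ℤ) = s then 1 else 0)
    (a : ℤ) (ha0 : 0 ≤ a)
    (l'k : ↥(Finset.Icc (1 : ℤ) s) → ℚ)
    (hmem : ∃ x : ↥(Finset.Icc (1 : ℤ) s) → ℤ, l'k = fun i => -(a : ℚ) * gs i + x i)
    (hS : ∀ j, ∑ i, l'k i * (B i j : ℚ) ≤ 0)
    (hmin : ∀ y : ↥(Finset.Icc (1 : ℤ) s) → ℚ,
      (∃ x : ↥(Finset.Icc (1 : ℤ) s) → ℤ, y = fun i => -(a : ℚ) * gs i + x i) →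
      (∀ j, ∑ i, y i * (B i j : ℚ) ≤ 0) → ∀ i, l'k i ≤ y i) :
    chiQ B l'k = ((a : ℚ) * (1 - (n 1 s : ℚ))) / (2 * (n 1 s : ℚ)) +
      ∑ j ∈ Finset.Icc (1 : ℤ) a, Int.fract (((j * n 1 (s - 1) : ℤ) : ℚ) / ((n 1 s : ℤ) : ℚ)) := by
  have hn : IsContinuant s k n := ⟨hn1, hn0, hrec⟩
  rw [chiQ_eq_chi hB]
  exact chi_eq_of_isLeast hs hk hn ha0
    (isLeast_extend hB (extend_eq_dualLast hs hk hn hB hgs) hmem hS hmin)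

/-- for the lens space `L(p,q)` given by the chain plumbing with
`p/q = [k_1,…,k_s]`, and the spin^c structure indexed by `0 ≤ a < p`, one has
`χ(l'_{[-a g_s]}) = a(1-p)/(2p) + ∑_{j=1}^{a} {j q'/p}` where `q' = n_{1,s-1}`
(so `q q' ≡ 1 (mod p)`). -/
theorem lens_chi_min_rep (s : ℤ) (hs : 1 ≤ s) (k : ℤ → ℤ) (n : ℤ → ℤ → ℤ)
    (hk : ∀ i, 1 ≤ i → i ≤ s → 2 ≤ k i)
    (hn1 : ∀ i, n i (i - 1) = 1)
    (hn0 : ∀ i j, j < i - 1 → n i j = 0)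
    (hrec : ∀ i j, i ≤ j → j ≤ s → n i j = k i * n (i + 1) j - n (i + 2) j)
    (B : ↥(Finset.Icc (1 : ℤ) s) → ↥(Finset.Icc (1 : ℤ) s) → ℤ)
    (hB : ∀ i j : ↥(Finset.Icc (1 : ℤ) s), B i j =
      if (i : ℤ) = (j : ℤ) then -(k (i : ℤ))
      else if (i : ℤ) = (j : ℤ) + 1 ∨ (j : ℤ) = (i : ℤ) + 1 then 1 else 0)
    (gs : ↥(Finset.Icc (1 : ℤ) s) → ℚ)
    (hgs : ∀ j : ↥(Finset.Icc (1 : ℤ) s),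
      ∑ i, gs i * (B i j : ℚ) = if (j : ℤ) = s then 1 else 0)
    (a : ℤ) (ha0 : 0 ≤ a) (hap : a < n 1 s)
    (l'k : ↥(Finset.Icc (1 : ℤ) s) → ℚ)
    (hmem : ∃ x : ↥(Finset.Icc (1 : ℤ) s) → ℤ, l'k = fun i => -(a : ℚ) * gs i + x i)
    (hS : ∀ j, ∑ i, l'k i * (B i j : ℚ) ≤ 0)
    (hmin : ∀ y : ↥(Finset.Icc (1 : ℤ) s) → ℚ,
      (∃ x : ↥(Finset.Icc (1 : ℤ) s) → ℤ, y = fun i => -(a : ℚ) * gs i + x i) →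
      (∀ j, ∑ i, y i * (B i j : ℚ) ≤ 0) → ∀ i, l'k i ≤ y i) :
    chiQ B l'k = ((a : ℚ) * (1 - (n 1 s : ℚ))) / (2 * (n 1 s : ℚ)) +
      ∑ j ∈ Finset.Icc (1 : ℤ) a, Int.fract (((j * n 1 (s - 1) : ℤ) : ℚ) / ((n 1 s : ℤ) : ℚ)) :=
  lens_chi_min_rep_general s hs k n hk hn1 hn0 hrec B hB gs hgs a ha0 l'k hmem hS hmin
end

section
/- For any p-th root of unity sum identity: (1/p)·Σ_{ξ^p=1, ξ≠1} 1/((ξ^q-1)(ξ-1)) = (p-1)/(4p) - s(q,p), where gcd(p,q)=1 and s(q,p) is the Dedekind sum. -/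
open Finset Polynomial

/-- The sawtooth function `((x)) = {x} - 1/2` for `x ∉ ℤ`, and `((x)) = 0` for `x ∈ ℤ`. -/
noncomputable def saw (x : ℚ) : ℚ := if Int.fract x = 0 then 0 else Int.fract x - 1 / 2

/-- The Dedekind sum `s(q,p) = ∑_{l=0}^{p-1} ((l/p)) ((q l/p))`. -/
noncomputable def dedekindSum (q : ℤ) (p : ℕ) : ℚ :=
  ∑ l ∈ Finset.range p, saw ((l : ℚ) / p) * saw ((q : ℚ) * l / p)

/-- The set of nontrivial `p`-th roots of unity in `ℂ`. -/
noncomputable def nontrivialRoots (p : ℕ) : Finset ℂ :=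
  (Polynomial.nthRoots p (1 : ℂ)).toFinset.erase 1



lemma weighted_geom (x : ℂ) (n : ℕ) :
    (x - 1) * ∑ k ∈ range n, (k : ℂ) * x ^ k
      = ((n : ℂ) - 1) * x ^ n - ∑ k ∈ range n, x ^ k + 1 := by
  induction n with
  | zero => simp
  | succ n ih =>
    rw [sum_range_succ, sum_range_succ]
    push_cast
    linear_combination ih

lemma key_inv {p : ℕ} (hp : p ≠ 0) {ξ : ℂ} (hξp : ξ ^ p = 1) (hξ1 : ξ ≠ 1) :
    (∑ k ∈ range p, (k : ℂ) * ξ ^ k) * (ξ - 1) = p := by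
  have hg : ∑ k ∈ range p, ξ ^ k = 0 := by
    rw [geom_sum_eq hξ1, hξp, sub_self, zero_div]
  have := weighted_geom ξ p
  rw [hξp, hg] at this
  linear_combination this





lemma roots_pow_sum {p : ℕ} (hp : p ≠ 0) (m : ℕ) :
    ∑ ξ ∈ nontrivialRoots p, ξ ^ m = (if p ∣ m then (p : ℂ) else 0) - 1 := by
  have hp0 : 0 < p := Nat.pos_of_ne_zero hp
  have : NeZero p := ⟨hp⟩
  set ζ : ℂ := Complex.exp (2 * Real.pi * Complex.I / p) with hζdef
  have hζ : IsPrimitiveRoot ζ p := Complex.isPrimitiveRoot_exp p hp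
  have hfull : (nthRoots p (1 : ℂ)).toFinset = (range p).image (ζ ^ ·) := by
    ext x
    simp only [Multiset.mem_toFinset, mem_nthRoots hp0, mem_image, mem_range]
    constructor
    · intro hx
      obtain ⟨i, hi, hix⟩ := hζ.eq_pow_of_pow_eq_one hx
      exact ⟨i, hi, hix⟩
    · rintro ⟨i, _, rfl⟩
      rw [← pow_mul, mul_comm i p, pow_mul, hζ.pow_eq_one, one_pow]
  have hone : (1 : ℂ) ∈ (nthRoots p (1 : ℂ)).toFinset := by
    simp [Multiset.mem_toFinset, mem_nthRoots hp0]
  have hfs : ∑ ξ ∈ (nthRoots p (1 : ℂ)).toFinset, ξ ^ m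
      = ∑ i ∈ range p, (ζ ^ m) ^ i := by
    rw [hfull, sum_image]
    · congr 1; ext i; rw [← pow_mul, ← pow_mul, mul_comm]
    · intro a ha b hb h
      exact hζ.pow_inj (mem_range.mp ha) (mem_range.mp hb) h
  have hgs : ∑ i ∈ range p, (ζ ^ m) ^ i = if p ∣ m then (p : ℂ) else 0 := by
    by_cases h : p ∣ m
    · rw [if_pos h, (hζ.pow_eq_one_iff_dvd m).mpr h]
      simp
    · rw [if_neg h, geom_sum_eq (fun hc => h ((hζ.pow_eq_one_iff_dvd m).mp hc)),
        ← pow_mul, mul_comm, pow_mul, hζ.pow_eq_one, one_pow, sub_self, zero_div]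
  rw [nontrivialRoots, Finset.sum_erase_eq_sub hone, hfs, hgs, one_pow]







-- injective-on of l ↦ q*l % p
lemma mul_mod_injOn {p q : ℕ} (hq : Nat.Coprime q p) :
    Set.InjOn (fun l => q * l % p) (range p) := by
  intro a ha b hb h
  simp only [coe_range, Set.mem_Iio] at ha hb
  have : a ≡ b [MOD p] :=
    Nat.ModEq.cancel_left_of_coprime (by rwa [Nat.coprime_comm] at hq) h
  rwa [Nat.ModEq, Nat.mod_eq_of_lt ha, Nat.mod_eq_of_lt hb] at this

lemma sum_mul_mod {p q : ℕ} (hp : p ≠ 0) (hq : Nat.Coprime q p) (f : ℕ → ℚ) :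
    ∑ l ∈ range p, f (q * l % p) = ∑ l ∈ range p, f l := by
  have himg : (range p).image (fun l => q * l % p) = range p := by
    apply Finset.eq_of_subset_of_card_le
    · intro x hx
      simp only [mem_image, mem_range] at hx ⊢
      obtain ⟨l, _, rfl⟩ := hx
      exact Nat.mod_lt _ (Nat.pos_of_ne_zero hp)
    · rw [Finset.card_image_of_injOn (mul_mod_injOn hq), card_range]
  calc ∑ l ∈ range p, f (q * l % p)
      = ∑ x ∈ (range p).image (fun l => q * l % p), f x :=
        (Finset.sum_image (fun a ha b hb h => mul_mod_injOn hq ha hb h)).symm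
    _ = ∑ l ∈ range p, f l := by rw [himg]

lemma rud_mod_ne_zero {p q l : ℕ} (hq : Nat.Coprime q p) (hl : l ∈ range p) (hl0 : l ≠ 0) :
    q * l % p ≠ 0 := by
  intro h
  have hdvd : p ∣ q * l := Nat.dvd_of_mod_eq_zero h
  have : p ∣ l := (Nat.Coprime.dvd_of_dvd_mul_left (by rwa [Nat.coprime_comm] at hq) hdvd)
  have := Nat.le_of_dvd (Nat.pos_of_ne_zero hl0) this
  exact absurd (mem_range.mp hl) (not_lt.mpr this)

lemma dedekind_eval {p q : ℕ} (hp : 2 ≤ p) (hq : Nat.Coprime q p) :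
    dedekindSum q p
      = (∑ l ∈ range p, (l : ℚ) * ((q * l % p : ℕ) : ℚ)) / p ^ 2 - ((p : ℚ) - 1) / 4 := by
  have hp0 : (0:ℕ) < p := by omega
  have hpQ : (p : ℚ) ≠ 0 := by positivity
  have hterm : ∀ l ∈ range p,
      saw ((l : ℚ) / p) * saw ((q : ℚ) * l / p)
        = (l : ℚ) * ((q * l % p : ℕ) : ℚ) / p ^ 2 - (l : ℚ) / (2 * p)
          - ((q * l % p : ℕ) : ℚ) / (2 * p) + (if l = 0 then 0 else 1/4) := by
    intro l hl
    have hlp : l < p := mem_range.mp hl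
    have hfr1 : Int.fract ((l : ℚ) / p) = (l : ℚ) / p := by
      apply Int.fract_eq_self.mpr
      constructor
      · positivity
      · rw [div_lt_one (by positivity)]; exact_mod_cast hlp
    have hfr2 : Int.fract ((q : ℚ) * l / p) = ((q * l % p : ℕ) : ℚ) / p := by
      rw [show ((q:ℚ) * l) = ((q*l : ℕ) : ℚ) by push_cast; ring,
        Int.fract_div_natCast_eq_div_natCast_mod]
    by_cases hl0 : l = 0
    · subst hl0; simp [saw]
    · have hm0 : q * l % p ≠ 0 := rud_mod_ne_zero hq hl hl0
      rw [saw, saw, hfr1, hfr2, if_neg, if_neg, if_neg hl0]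
      · field_simp
        ring
      · simp only [_root_.div_eq_zero_iff]
        push_neg
        exact ⟨by exact_mod_cast hm0, hpQ⟩
      · simp only [_root_.div_eq_zero_iff]
        push_neg
        constructor
        · exact_mod_cast hl0
        · exact hpQ
  rw [dedekindSum]
  push_cast
  rw [Finset.sum_congr rfl hterm]
  rw [Finset.sum_add_distrib, Finset.sum_sub_distrib, Finset.sum_sub_distrib]
  have hS : ∑ l ∈ range p, (l : ℚ) = p * (p - 1) / 2 := by
    have := Finset.sum_range_id_mul_two p
    have h3 : ((p * (p-1) : ℕ) : ℚ) = (p:ℚ) * ((p:ℚ) - 1) := by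
      rw [Nat.cast_mul, Nat.cast_sub (by omega : 1 ≤ p)]
      push_cast; ring
    have h2 : ((∑ l ∈ range p, l : ℕ) : ℚ) * 2 = (p : ℚ) * ((p:ℚ) - 1) := by
      rw [← h3, ← this]; push_cast; ring
    push_cast at h2
    linarith
  have hSm : ∑ l ∈ range p, ((q * l % p : ℕ) : ℚ) = p * (p - 1) / 2 := by
    rw [sum_mul_mod (by omega) hq (fun x => (x : ℚ))]
    exact hS
  have hif : ∑ l ∈ range p, (if l = 0 then (0:ℚ) else 1/4) = ((p:ℚ) - 1) / 4 := by
    have : ∀ l, (if l = 0 then (0:ℚ) else 1/4) = 1/4 - (if l = 0 then 1/4 else 0) := by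
      intro l; split <;> ring
    simp only [this]
    rw [Finset.sum_sub_distrib, Finset.sum_const, card_range,
      Finset.sum_ite_eq' (range p) 0 (fun _ => (1/4 : ℚ)), if_pos (mem_range.mpr hp0)]
    push_cast
    ring
  simp only [← Finset.sum_div]
  rw [hS, hSm, hif]
  field_simp
  ring

lemma rud_mod_eq_zero_of_dvd {a p : ℕ} (h : p ∣ a) : a % p = 0 := by
  obtain ⟨c, rfl⟩ := h; simp [Nat.mul_mod_right]



lemma rud_inner_sum {p : ℕ} (hp : p ≠ 0) (q j : ℕ) :
    ∑ k ∈ range p, (if p ∣ q * j + k then (k : ℂ) else 0)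
      = (((p - q * j % p) % p : ℕ) : ℂ) := by
  set r := (p - q * j % p) % p with hr
  have hp0 : 0 < p := Nat.pos_of_ne_zero hp
  have hrp : r < p := Nat.mod_lt _ hp0
  have hdr : p ∣ q * j + r := by
    have hm : q * j % p < p := Nat.mod_lt _ hp0
    have hd : q * j - q * j % p = p * (q * j / p) := by
      have := Nat.div_add_mod (q * j) p; omega
    by_cases hm0 : q * j % p = 0
    · have : r = 0 := by rw [hr, hm0, Nat.sub_zero, Nat.mod_self]
      rw [this, Nat.add_zero]
      exact Nat.dvd_of_mod_eq_zero hm0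
    · have hrval : r = p - q * j % p := by
        rw [hr]; exact Nat.mod_eq_of_lt (by omega)
      have hle : q * j % p ≤ q * j := Nat.mod_le _ _
      have : q * j + r = (p * (q * j / p)) + p := by
        rw [hrval]; omega
      rw [this]
      exact Dvd.dvd.add (Dvd.intro _ rfl) dvd_rfl
  rw [Finset.sum_eq_single_of_mem r (mem_range.mpr hrp)]
  · rw [if_pos hdr]
  · intro k hk hkr
    rw [if_neg]
    intro hdk
    apply hkr
    have : k ≡ r [MOD p] := by
      have e1 : (q * j + k) % p = 0 := rud_mod_eq_zero_of_dvd hdk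
      have e2 : (q * j + r) % p = 0 := rud_mod_eq_zero_of_dvd hdr
      have h1 : q * j + k ≡ q * j + r [MOD p] := by
        unfold Nat.ModEq; rw [e1, e2]
      exact h1.add_left_cancel' _
    rwa [Nat.ModEq, Nat.mod_eq_of_lt (mem_range.mp hk), Nat.mod_eq_of_lt hrp] at this

/-- `(1/p) ∑_{ξ^p = 1, ξ ≠ 1} 1/((ξ^q - 1)(ξ - 1)) = (p-1)/(4p) - s(q,p)` for `gcd(p,q) = 1`. -/
theorem roots_of_unity_dedekind (p : ℕ) (hp : 2 ≤ p) (q : ℕ) (hq : Nat.Coprime q p) :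
    (1 / (p : ℂ)) * ∑ ξ ∈ nontrivialRoots p, 1 / ((ξ ^ q - 1) * (ξ - 1)) =
      ((p : ℂ) - 1) / (4 * p) - (dedekindSum q p : ℂ) := by
  have hp0 : p ≠ 0 := by omega
  have hpn0 : 0 < p := by omega
  have hpC : (p : ℂ) ≠ 0 := Nat.cast_ne_zero.mpr hp0
  -- per-root expansion
  have expand : ∀ ξ ∈ nontrivialRoots p,
      1 / ((ξ ^ q - 1) * (ξ - 1))
        = (1 / (p : ℂ) ^ 2) * ∑ j ∈ range p, ∑ k ∈ range p,
            (j : ℂ) * (k : ℂ) * ξ ^ (q * j + k) := by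
    intro ξ hξ
    rw [nontrivialRoots, Finset.mem_erase, Multiset.mem_toFinset,
      Polynomial.mem_nthRoots hpn0] at hξ
    obtain ⟨hξ1, hξp⟩ := hξ
    have hξq1 : ξ ^ q ≠ 1 := by
      intro h
      have h1 : orderOf ξ ∣ q := orderOf_dvd_of_pow_eq_one h
      have h2 : orderOf ξ ∣ p := orderOf_dvd_of_pow_eq_one hξp
      have : orderOf ξ ∣ 1 := by
        have := Nat.dvd_gcd h1 h2
        rwa [Nat.Coprime.gcd_eq_one hq] at this
      exact hξ1 (orderOf_eq_one_iff.mp (Nat.dvd_one.mp this))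
    have hξqp : (ξ ^ q) ^ p = 1 := by
      rw [← pow_mul, mul_comm, pow_mul, hξp, one_pow]
    have h1 := key_inv hp0 hξp hξ1
    have h2 := key_inv hp0 hξqp hξq1
    have hprod : (∑ j ∈ range p, (j : ℂ) * (ξ ^ q) ^ j) * (∑ k ∈ range p, (k : ℂ) * ξ ^ k)
        = ∑ j ∈ range p, ∑ k ∈ range p, (j : ℂ) * (k : ℂ) * ξ ^ (q * j + k) := by
      rw [Finset.sum_mul_sum]
      refine Finset.sum_congr rfl fun j _ => Finset.sum_congr rfl fun k _ => ?_
      rw [pow_add, ← pow_mul, mul_comm q j]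
      ring
    have hkey : (∑ j ∈ range p, ∑ k ∈ range p, (j : ℂ) * (k : ℂ) * ξ ^ (q * j + k))
        * ((ξ ^ q - 1) * (ξ - 1)) = (p : ℂ) ^ 2 := by
      rw [← hprod]
      linear_combination
        ((∑ j ∈ range p, (j : ℂ) * (ξ ^ q) ^ j) * (ξ ^ q - 1)) * h1 + (p : ℂ) * h2
    have hXY : (ξ ^ q - 1) * (ξ - 1) ≠ 0 :=
      mul_ne_zero (sub_ne_zero.mpr hξq1) (sub_ne_zero.mpr hξ1)
    field_simp
    linear_combination -hkey
  -- sum over roots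
  have step : ∑ ξ ∈ nontrivialRoots p, 1 / ((ξ ^ q - 1) * (ξ - 1))
      = (1 / (p : ℂ) ^ 2) * ∑ j ∈ range p, ∑ k ∈ range p,
          (j : ℂ) * (k : ℂ) * ((if p ∣ q * j + k then (p : ℂ) else 0) - 1) := by
    rw [Finset.sum_congr rfl expand, ← Finset.mul_sum]
    congr 1
    rw [Finset.sum_comm]
    refine Finset.sum_congr rfl fun j _ => ?_
    rw [Finset.sum_comm]
    refine Finset.sum_congr rfl fun k _ => ?_
    rw [← roots_pow_sum hp0 (q * j + k), Finset.mul_sum]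
  -- evaluate the double sum
  have inner : ∀ j ∈ range p,
      ∑ k ∈ range p, (j : ℂ) * (k : ℂ) * ((if p ∣ q * j + k then (p : ℂ) else 0) - 1)
        = (j : ℂ) * (p : ℂ) * (((p - q * j % p) % p : ℕ) : ℂ)
          - (j : ℂ) * ∑ k ∈ range p, (k : ℂ) := by
    intro j _
    have : ∀ k ∈ range p,
        (j : ℂ) * (k : ℂ) * ((if p ∣ q * j + k then (p : ℂ) else 0) - 1)
          = (j : ℂ) * (p : ℂ) * (if p ∣ q * j + k then (k : ℂ) else 0)
            - (j : ℂ) * (k : ℂ) := by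
      intro k _
      by_cases hd : p ∣ q * j + k <;> simp [hd] <;> ring
    rw [Finset.sum_congr rfl this, Finset.sum_sub_distrib, ← Finset.mul_sum, ← Finset.mul_sum,
      rud_inner_sum hp0 q j]
  -- ℕ identity relating r and m
  have hnat : ∀ j ∈ range p,
      j * ((p - q * j % p) % p) + j * (q * j % p) = j * p := by
    intro j hj
    by_cases hj0 : j = 0
    · subst hj0; simp
    · have hm0 : q * j % p ≠ 0 := rud_mod_ne_zero hq hj hj0
      have hmlt : q * j % p < p := Nat.mod_lt _ hpn0
      have : (p - q * j % p) % p = p - q * j % p := Nat.mod_eq_of_lt (by omega)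
      rw [this]
      have : p - q * j % p + q * j % p = p := by omega
      calc j * (p - q * j % p) + j * (q * j % p) = j * (p - q * j % p + q * j % p) := by ring
        _ = j * p := by rw [this]
  -- gauss sum in ℂ
  have hS : ∑ j ∈ range p, (j : ℂ) = (p : ℂ) * ((p : ℂ) - 1) / 2 := by
    have h3 : ((p * (p - 1) : ℕ) : ℂ) = (p : ℂ) * ((p : ℂ) - 1) := by
      rw [Nat.cast_mul, Nat.cast_sub (by omega : 1 ≤ p)]
      push_cast; ring
    have h2 : ((∑ l ∈ range p, l : ℕ) : ℂ) * 2 = (p : ℂ) * ((p : ℂ) - 1) := by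
      rw [← h3, ← Finset.sum_range_id_mul_two p]; push_cast; ring
    push_cast at h2
    linear_combination h2 / 2
  -- relate r-sum and m-sum
  have hR : ∑ j ∈ range p, (j : ℂ) * (((p - q * j % p) % p : ℕ) : ℂ)
      = (p : ℂ) * ∑ j ∈ range p, (j : ℂ)
        - ∑ j ∈ range p, (j : ℂ) * ((q * j % p : ℕ) : ℂ) := by
    have h := Finset.sum_congr rfl hnat
    have hc := congrArg (Nat.cast : ℕ → ℂ) h
    push_cast at hc
    rw [Finset.sum_add_distrib] at hc
    have hmul : ∑ j ∈ range p, (j : ℂ) * (p : ℂ) = (p : ℂ) * ∑ j ∈ range p, (j : ℂ) := by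
      rw [Finset.mul_sum]
      exact Finset.sum_congr rfl fun j _ => by ring
    linear_combination hc + hmul
  have e1 : ∑ j ∈ range p, ((j : ℂ) * (p : ℂ) * (((p - q * j % p) % p : ℕ) : ℂ))
      = (p : ℂ) * ∑ j ∈ range p, (j : ℂ) * (((p - q * j % p) % p : ℕ) : ℂ) := by
    rw [Finset.mul_sum]
    exact Finset.sum_congr rfl fun j _ => by ring
  have e2 : ∑ j ∈ range p, ((j : ℂ) * ∑ k ∈ range p, (k : ℂ))
      = (∑ j ∈ range p, (j : ℂ)) * (∑ k ∈ range p, (k : ℂ)) := by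
    rw [← Finset.sum_mul]
  have hD : (dedekindSum q p : ℂ)
      = (∑ l ∈ range p, (l : ℂ) * ((q * l % p : ℕ) : ℂ)) / (p : ℂ) ^ 2
        - ((p : ℂ) - 1) / 4 := by
    rw [dedekind_eval hp hq]
    push_cast
    ring
  rw [step, Finset.sum_congr rfl inner, Finset.sum_sub_distrib, e1, e2, hR, hS, hD]
  field_simp
  ring
end

section
/- For gcd(p,q)=1 and q' with qq' ≡ 1 (mod p), and any integer a with 0 < a ≤ p-1: (1/p)·Σ_{ξ^p=1, ξ≠1} ξ^{-a}/(ξ^q - 1) = {a q'/p} + (1-p)/(2p). -/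
open Finset Polynomial

lemma zpow_eq_zpow_of_modEq {G₀ : Type*} [GroupWithZero G₀] {p : ℕ} (hp : 0 < p) {x : G₀}
    (hx : x ^ p = 1) {m n : ℤ} (h : m ≡ n [ZMOD p]) : x ^ m = x ^ n := by
  have hx0 : x ≠ 0 := by
    rintro rfl
    rw [zero_pow hp.ne'] at hx
    exact zero_ne_one hx
  obtain ⟨k, hk⟩ := h.dvd
  rw [show n = m + p * k by omega, zpow_add₀ hx0, zpow_mul, zpow_natCast, hx, one_zpow, mul_one]

lemma zpow_zpow_eq_self_of_modEq {G₀ : Type*} [GroupWithZero G₀] {p : ℕ} (hp : 0 < p) {x : G₀}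
    (hx : x ^ p = 1) {k k' : ℤ} (h : k * k' ≡ 1 [ZMOD p]) : (x ^ k) ^ k' = x := by
  rw [← zpow_mul, zpow_eq_zpow_of_modEq hp hx h, zpow_one]

section

variable {p : ℕ}

lemma nontrivialRoots_eq_erase : nontrivialRoots p = (nthRootsFinset p (1 : ℂ)).erase 1 := by
  classical
  rw [nthRootsFinset_def]
  rfl

lemma mem_nontrivialRoots (hp : 0 < p) {ξ : ℂ} :
    ξ ∈ nontrivialRoots p ↔ ξ ^ p = 1 ∧ ξ ≠ 1 := by
  rw [nontrivialRoots, mem_erase, Multiset.mem_toFinset, mem_nthRoots hp, and_comm]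

lemma card_nontrivialRoots (hp : 0 < p) : #(nontrivialRoots p) = p - 1 := by
  rw [nontrivialRoots_eq_erase, card_erase_of_mem (one_mem_nthRootsFinset hp),
    (Complex.isPrimitiveRoot_exp p hp.ne').card_nthRootsFinset]

lemma zpow_mem_nontrivialRoots (hp : 0 < p) {k k' : ℤ} (h : k * k' ≡ 1 [ZMOD p]) {ξ : ℂ}
    (hξ : ξ ∈ nontrivialRoots p) : ξ ^ k ∈ nontrivialRoots p := by
  obtain ⟨hξp, hξ1⟩ := (mem_nontrivialRoots hp).1 hξ
  refine (mem_nontrivialRoots hp).2 ⟨?_, fun hk ↦ hξ1 ?_⟩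
  · rw [← zpow_natCast, ← zpow_mul, mul_comm, zpow_mul, zpow_natCast, hξp, one_zpow]
  · rw [← zpow_zpow_eq_self_of_modEq hp hξp h, hk, one_zpow]

lemma sum_nontrivialRoots_comp_zpow {M : Type*} [AddCommMonoid M] (hp : 0 < p) {k k' : ℤ}
    (h : k * k' ≡ 1 [ZMOD p]) (f : ℂ → M) :
    ∑ ξ ∈ nontrivialRoots p, f (ξ ^ k) = ∑ ξ ∈ nontrivialRoots p, f ξ := by
  have h' : k' * k ≡ 1 [ZMOD p] := by rwa [mul_comm]
  exact sum_nbij' (· ^ k) (· ^ k') (fun _ ↦ zpow_mem_nontrivialRoots hp h)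
    (fun _ ↦ zpow_mem_nontrivialRoots hp h')
    (fun ξ hξ ↦ zpow_zpow_eq_self_of_modEq hp ((mem_nontrivialRoots hp).1 hξ).1 h)
    (fun ξ hξ ↦ zpow_zpow_eq_self_of_modEq hp ((mem_nontrivialRoots hp).1 hξ).1 h')
    (fun _ _ ↦ rfl)

lemma sum_nthRootsFinset_pow (hp : 0 < p) {j : ℕ} (hj : ¬ p ∣ j) :
    ∑ η ∈ nthRootsFinset p (1 : ℂ), η ^ j = 0 := by
  obtain ⟨ζ, hζ⟩ : ∃ ζ : ℂ, IsPrimitiveRoot ζ p := ⟨_, Complex.isPrimitiveRoot_exp p hp.ne'⟩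
  have hζ0 : ζ ≠ 0 := hζ.ne_zero hp.ne'
  have hmem {c : ℂ} (hc : c ^ p = 1) {η : ℂ} (hη : η ∈ nthRootsFinset p (1 : ℂ)) :
      c * η ∈ nthRootsFinset p (1 : ℂ) := by
    rw [mem_nthRootsFinset hp] at hη ⊢
    rw [mul_pow, hc, hη, one_mul]
  -- multiplication by `ζ` permutes the roots, so the sum is fixed by the factor `ζ ^ j ≠ 1`
  have hshift : ∑ η ∈ nthRootsFinset p (1 : ℂ), (ζ * η) ^ j =
      ∑ η ∈ nthRootsFinset p (1 : ℂ), η ^ j :=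
    sum_nbij' (ζ * ·) (ζ⁻¹ * ·) (fun _ ↦ hmem hζ.pow_eq_one)
      (fun _ ↦ hmem (by rw [inv_pow, hζ.pow_eq_one, inv_one]))
      (fun η _ ↦ inv_mul_cancel_left₀ hζ0 η) (fun η _ ↦ mul_inv_cancel_left₀ hζ0 η)
      (fun _ _ ↦ rfl)
  simp only [mul_pow, ← mul_sum] at hshift
  have hζj : ζ ^ j - 1 ≠ 0 := sub_ne_zero.2 (mt (hζ.pow_eq_one_iff_dvd j).1 hj)
  exact (mul_eq_zero.1 (by linear_combination hshift)).resolve_left hζj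

lemma sum_nontrivialRoots_pow (hp : 0 < p) {j : ℕ} (hj : ¬ p ∣ j) :
    ∑ ξ ∈ nontrivialRoots p, ξ ^ j = -1 := by
  rw [nontrivialRoots_eq_erase, sum_erase_eq_sub (one_mem_nthRootsFinset hp),
    sum_nthRootsFinset_pow hp hj, one_pow, zero_sub]

lemma sum_nontrivialRoots_one_div_sub_one (hp : 0 < p) :
    ∑ ξ ∈ nontrivialRoots p, 1 / (ξ - 1) = -((p : ℂ) - 1) / 2 := by
  have hinv := sum_nontrivialRoots_comp_zpow hp (k := -1) (k' := -1) (by norm_num)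
    fun ξ ↦ 1 / (ξ - 1)
  have hpair : ∀ ξ ∈ nontrivialRoots p, 1 / (ξ - 1) + 1 / (ξ ^ (-1 : ℤ) - 1) = -1 := by
    intro ξ hξ
    obtain ⟨hξp, hξ1⟩ := (mem_nontrivialRoots hp).1 hξ
    have hξ0 : ξ ≠ 0 := by rintro rfl; simp [zero_pow hp.ne'] at hξp
    have : ξ - 1 ≠ 0 := sub_ne_zero.2 hξ1
    have : 1 - ξ ≠ 0 := sub_ne_zero.2 hξ1.symm
    rw [zpow_neg_one]
    field_simp
    ring
  have := sum_add_distrib.symm.trans (sum_congr rfl hpair)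
  rw [hinv, sum_const, card_nontrivialRoots hp, nsmul_eq_mul, Nat.cast_pred hp] at this
  linear_combination this / 2

lemma sum_nontrivialRoots_pow_div_sub_one {c : ℕ} (hc0 : 0 < c) (hcp : c ≤ p) :
    ∑ ξ ∈ nontrivialRoots p, ξ ^ c / (ξ - 1) = p - c - ((p : ℂ) - 1) / 2 := by
  have hp : 0 < p := hc0.trans_le hcp
  have hgeom : ∀ ξ ∈ nontrivialRoots p,
      ξ ^ c / (ξ - 1) = 1 / (ξ - 1) + ∑ j ∈ range c, ξ ^ j := by
    intro ξ hξ
    have hξ1 : ξ - 1 ≠ 0 := sub_ne_zero.2 ((mem_nontrivialRoots hp).1 hξ).2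
    rw [div_add' _ _ _ hξ1, geom_sum_mul, add_sub_cancel]
  have hpowers : ∑ j ∈ range c, ∑ ξ ∈ nontrivialRoots p, ξ ^ j = p - c := by
    obtain ⟨n, rfl⟩ := Nat.exists_eq_add_of_lt hc0
    rw [sum_range_succ', sum_congr rfl fun j hj ↦ sum_nontrivialRoots_pow hp
      (Nat.not_dvd_of_pos_of_lt j.succ_pos (by rw [mem_range] at hj; omega))]
    simp only [pow_zero, sum_const, card_range, card_nontrivialRoots hp, nsmul_eq_mul,
      Nat.cast_pred hp]
    push_cast
    ring
  rw [sum_congr rfl hgeom, sum_add_distrib, sum_nontrivialRoots_one_div_sub_one hp, sum_comm,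
    hpowers]
  ring

lemma sum_nontrivialRoots_zpow_neg_div_sub_one (hp : 0 < p) (m : ℤ) :
    ∑ ξ ∈ nontrivialRoots p, ξ ^ (-m) / (ξ - 1) = ((m % p : ℤ) : ℂ) - ((p : ℂ) - 1) / 2 := by
  have hp' : (0 : ℤ) < p := by exact_mod_cast hp
  have hr0 := Int.emod_nonneg m hp'.ne'
  have hrp := Int.emod_lt_of_pos m hp'
  obtain ⟨c, hc⟩ : ∃ c : ℕ, (c : ℤ) = p - m % p := ⟨_, Int.toNat_of_nonneg (by omega)⟩
  have hexp : ∀ ξ ∈ nontrivialRoots p, ξ ^ (-m) = ξ ^ c := by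
    intro ξ hξ
    rw [← zpow_natCast, hc]
    refine zpow_eq_zpow_of_modEq hp ((mem_nontrivialRoots hp).1 hξ).1
      (Int.modEq_iff_dvd.2 ⟨1 + m / p, ?_⟩)
    rw [Int.emod_def]
    ring
  rw [sum_congr rfl fun ξ hξ ↦ by rw [hexp ξ hξ],
    sum_nontrivialRoots_pow_div_sub_one (by omega) (by omega)]
  have hcC : (c : ℂ) = p - ((m % p : ℤ) : ℂ) := by exact_mod_cast hc
  rw [hcC]
  ring

end

theorem roots_of_unity_fract_general (p : ℕ) (hp : 0 < p) (q q' a : ℤ)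
    (hq' : q * q' ≡ 1 [ZMOD (p : ℤ)]) :
    (1 / (p : ℂ)) * ∑ ξ ∈ nontrivialRoots p, ξ ^ (-a) / (ξ ^ q - 1) =
      ((Int.fract (((a * q' : ℤ) : ℚ) / (p : ℚ)) : ℚ) : ℂ) + (1 - (p : ℂ)) / (2 * p) := by
  have hq'q : q' * q ≡ 1 [ZMOD p] := by rwa [mul_comm]
  have hsubst : ∀ ξ ∈ nontrivialRoots p,
      (ξ ^ q') ^ (-a) / ((ξ ^ q') ^ q - 1) = ξ ^ (-(a * q')) / (ξ - 1) := by
    intro ξ hξ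
    rw [zpow_zpow_eq_self_of_modEq hp ((mem_nontrivialRoots hp).1 hξ).1 hq'q, ← zpow_mul,
      mul_neg, mul_comm]
  rw [← sum_nontrivialRoots_comp_zpow hp hq'q fun ξ ↦ ξ ^ (-a) / (ξ ^ q - 1),
    sum_congr rfl hsubst, sum_nontrivialRoots_zpow_neg_div_sub_one hp,
    Int.fract_div_intCast_eq_div_intCast_mod]
  have hpC : (p : ℂ) ≠ 0 := by exact_mod_cast hp.ne'
  push_cast
  field_simp
  ring

/-- for `gcd(p,q) = 1`, `q q' ≡ 1 (mod p)` and `0 < a ≤ p - 1`: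
`(1/p) ∑_{ξ^p = 1, ξ ≠ 1} ξ^{-a}/(ξ^q - 1) = {a q'/p} + (1-p)/(2p)`. -/
theorem roots_of_unity_fract (p : ℕ) (hp : 0 < p) (q q' a : ℤ)
    (hq : IsCoprime q (p : ℤ))
    (hq' : q * q' ≡ 1 [ZMOD (p : ℤ)])
    (hq'0 : 0 < q') (hq'p : q' < p)
    (ha0 : 0 < a) (hap : a ≤ (p : ℤ) - 1) :
    (1 / (p : ℂ)) * ∑ ξ ∈ nontrivialRoots p, ξ ^ (-a) / (ξ ^ q - 1) =
      ((Int.fract (((a * q' : ℤ) : ℚ) / (p : ℚ)) : ℚ) : ℂ) + (1 - (p : ℂ)) / (2 * p) :=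
  roots_of_unity_fract_general p hp q q' a hq'
end
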